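/- arXiv:2211.13730 — 2 statements merged into one kernel-verified Lean document; each statement's English description precedes it below -/
import Mathlib

section
/- In a regular network, the path-distance function d satisfies the identity of indiscernibles: d(x,y) = 0 if and only if x = y. -/
open MeasureTheory Set Filter Topology
open scoped ENNReal

/-- A positively weighted graph: vertices `V`, edge index set `K`, endpoint map `E`,
positive weights `W`, with every vertex attached to some edge. -/
structure WeightedGraph where
  V : Type
  K : Type
  E : K → V × V
  W : K → ℝ
  W_pos : ∀ k, 0 < W k
  covers : ∀ v : V, ∃ k, (E k).1 = v ∨ (E k).2 = v

namespace WeightedGraph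

variable (G : WeightedGraph)

/-- The disjoint union `⊔_{k ∈ K} [0, W k]`. -/
def Un := (k : G.K) × (Icc (0 : ℝ) (G.W k))

/-- The extended metric on the disjoint union: `|x - x'|` on a common interval,
`∞` across distinct intervals. -/
noncomputable def d' (p q : G.Un) : ℝ≥0∞ :=
  open Classical in
  if p.1 = q.1 then ENNReal.ofReal |p.2.1 - q.2.1| else ⊤

/-- The gluing relation of the network construction. -/
def netRel (p q : G.Un) : Prop :=
  (p.2.1 = q.2.1 ∧ G.E p.1 = G.E q.1) ∨
  (p.2.1 = 0 ∧ q.2.1 = 0 ∧ (G.E p.1).1 = (G.E q.1).1) ∨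
  (p.2.1 = 0 ∧ q.2.1 = G.W q.1 ∧ (G.E p.1).1 = (G.E q.1).2) ∨
  (p.2.1 = G.W p.1 ∧ q.2.1 = 0 ∧ (G.E p.1).2 = (G.E q.1).1) ∨
  (p.2.1 = G.W p.1 ∧ q.2.1 = G.W q.1 ∧ (G.E p.1).2 = (G.E q.1).2)

/-- The setoid generated by the gluing relation. -/
def netSetoid : Setoid G.Un := ⟨Relation.EqvGen G.netRel, Relation.EqvGen.is_equivalence _⟩

/-- The chain-infimum distance associated to a relation `r` on the disjoint union:
the infimum over finite chains `p₁,q₁,…,pₙ,qₙ` with `r x p₁`, `r y qₙ`,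
`r qᵢ pᵢ₊₁`, of `Σ d'(pᵢ,qᵢ)`. -/
noncomputable def chainDist (r : G.Un → G.Un → Prop) (x y : G.Un) : ℝ≥0∞ :=
  ⨅ (n : ℕ) (p : Fin (n + 1) → G.Un) (q : Fin (n + 1) → G.Un)
    (_ : r x (p 0)) (_ : r y (q (Fin.last n)))
    (_ : ∀ i : Fin n, r (q i.castSucc) (p i.succ)),
    ∑ i, G.d' (p i) (q i)

/-- The network associated to a positively weighted graph: the quotient of the
disjoint union of intervals by the gluing relation. -/
def Net := Quotient G.netSetoid

/-- The path distance on the network. -/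
noncomputable def netDist (x y : G.Net) : ℝ≥0∞ :=
  G.chainDist G.netSetoid.r x.out y.out

/-- A point of the network is a vertex if it is the class of an interval endpoint. -/
def IsVertex (x : G.Net) : Prop :=
  ∃ p : G.Un, Quotient.mk G.netSetoid p = x ∧ (p.2.1 = 0 ∨ p.2.1 = G.W p.1)

/-- The edge of the network with index `k`, as a subset of the network. -/
def edgeSet (k : G.K) : Set G.Net :=
  {x | ∃ p : G.Un, p.1 = k ∧ Quotient.mk G.netSetoid p = x}

/-- The topology induced by the path distance (generated by open balls). -/
noncomputable instance : TopologicalSpace G.Net :=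
  TopologicalSpace.generateFrom {s | ∃ x r, s = {y | G.netDist x y < r}}

noncomputable instance : MeasurableSpace G.Net := borel G.Net

instance : BorelSpace G.Net := ⟨rfl⟩

/-- A network is regular if it is locally finite, edge lengths are bounded below by a
positive constant, and it is connected in the topology induced by the path distance. -/
structure IsRegular : Prop where
  locFin : ∀ v : G.Net, G.IsVertex v → {k : G.K | v ∈ G.edgeSet k}.Finite
  lb : ∃ ε > 0, ∀ k, ε ≤ G.W k
  conn : ConnectedSpace G.Net

/-- `p` is a path `[0, l] → 𝒩` that is an isometry onto its image. -/
def IsIsomPath (l : ℝ) (p : ℝ → G.Net) : Prop :=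
  ∀ a ∈ Icc (0 : ℝ) l, ∀ b ∈ Icc (0 : ℝ) l,
    G.netDist (p a) (p b) = ENNReal.ofReal |a - b|

/-- The length of a path `p` on `[a, b]`: supremum over partitions of the sums of
consecutive distances. -/
noncomputable def pathLen (p : ℝ → G.Net) (a b : ℝ) : ℝ≥0∞ :=
  ⨆ (n : ℕ) (t : Fin (n + 1) → ℝ) (_ : Monotone t) (_ : t 0 = a)
    (_ : t (Fin.last n) = b),
    ∑ i : Fin n, G.netDist (p (t i.castSucc)) (p (t i.succ))

/-- `f : 𝒩 → ℝ` is continuously differentiable if `f ∘ p` is continuously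
differentiable for every isometric path `p`. -/
def C1Fun (f : G.Net → ℝ) : Prop :=
  ∀ l > (0 : ℝ), ∀ p : ℝ → G.Net, G.IsIsomPath l p → ContDiffOn ℝ 1 (f ∘ p) (Icc 0 l)

/-- `f : 𝒩 → ℝ` is smooth if `f ∘ p` is smooth for every isometric path `p`. -/
def CInfFun (f : G.Net → ℝ) : Prop :=
  ∀ l > (0 : ℝ), ∀ p : ℝ → G.Net, G.IsIsomPath l p → ContDiffOn ℝ (⊤ : ℕ∞) (f ∘ p) (Icc 0 l)

/-- A spatial derivative: an operator `D : C¹(𝒩) → C(𝒩)` which along every isometric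
isomorphism `p : (0, l) → U` onto an open set `U` agrees with the classical
derivative. -/
def IsSpatialDeriv (D : (G.Net → ℝ) → (G.Net → ℝ)) : Prop :=
  (∀ f, G.C1Fun f → Continuous (D f)) ∧
  ∀ l > (0 : ℝ), ∀ p : ℝ → G.Net,
    (∀ a ∈ Ioo (0 : ℝ) l, ∀ b ∈ Ioo (0 : ℝ) l,
        G.netDist (p a) (p b) = ENNReal.ofReal |a - b|) →
    IsOpen (p '' Ioo 0 l) →
    ∀ f, G.C1Fun f → ∀ t ∈ Ioo (0 : ℝ) l, D f (p t) = deriv (f ∘ p) t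

/-- The canonical parametrization of the edge with index `k`. -/
noncomputable def edgeParam (k : G.K) (t : ℝ) : G.Net :=
  Quotient.mk G.netSetoid
    ⟨k, ⟨min (max t 0) (G.W k), ⟨le_min (le_max_right t 0) (G.W_pos k).le, min_le_right _ _⟩⟩⟩

/-- `P` assigns to each edge a parametrization realizing the orientation induced by the
spatial derivative `D`: it is the canonical parametrization or its reversal, and `D`
agrees with the derivative along it.  `P k 0` is the vertex `0_e` and `P k (W k)` the
vertex `w_e` of the edge `e` with index `k`. -/
def IsOrientation (D : (G.Net → ℝ) → (G.Net → ℝ)) (P : G.K → ℝ → G.Net) : Prop :=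
  ∀ k : G.K,
    ((P k = fun t => G.edgeParam k t) ∨ (P k = fun t => G.edgeParam k (G.W k - t))) ∧
    ∀ f, G.C1Fun f → ∀ t ∈ Ioo (0 : ℝ) (G.W k), D f (P k t) = deriv (f ∘ P k) t

/-- `μ` is a Lebesgue measure for the network: its restriction along every isometric
copy of a real interval is the classical Lebesgue measure. -/
def IsLebesgue (μ : Measure G.Net) : Prop :=
  ∀ l ≥ (0 : ℝ), ∀ p : ℝ → G.Net, G.IsIsomPath l p →
    ∀ s : Set ℝ, MeasurableSet s → s ⊆ Icc 0 l → μ (p '' s) = volume s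

/-- A test function in `C_c^∞([0,T] × 𝒩)`. -/
def TestFun (T : ℝ) (φ : ℝ → G.Net → ℝ) : Prop :=
  Continuous (fun q : ℝ × G.Net => φ q.1 q.2) ∧
  (∀ x, ContDiff ℝ (⊤ : ℕ∞) fun t => φ t x) ∧
  (∀ t, G.CInfFun (φ t)) ∧
  HasCompactSupport (fun q : ℝ × G.Net => φ q.1 q.2) ∧
  (tsupport fun q : ℝ × G.Net => φ q.1 q.2) ⊆ Icc 0 T ×ˢ (univ : Set G.Net)

/-- `ρ` and `ν` fulfill a (weak) conservation law on the network with spatial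
derivative `D` and Lebesgue measure `μ`: for all test functions `φ`,
`∬ ρ (φ_t + ν φ_x) dλ dt - ∫ (ρ φ)(T,·) - (ρ φ)(0,·) dλ = 0`. -/
def FulfillsCL (μ : Measure G.Net) (D : (G.Net → ℝ) → (G.Net → ℝ)) (T : ℝ)
    (ρ ν : ℝ → G.Net → ℝ) : Prop :=
  ∀ φ : ℝ → G.Net → ℝ, G.TestFun T φ →
    (∫ t in (0 : ℝ)..T, ∫ x, ρ t x * (deriv (fun s => φ s x) t + ν t x * D (φ t) x) ∂μ)
      - (∫ x, (ρ T x * φ T x - ρ 0 x * φ 0 x) ∂μ) = 0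

end WeightedGraph

section Aux

open Relation

variable (G : WeightedGraph)

/-- `u` is a vertex point with label `v`. -/
def VP (v : G.V) (u : G.Un) : Prop :=
  (u.2.1 = 0 ∧ (G.E u.1).1 = v) ∨
    (∃ k, G.E k = G.E u.1 ∧ u.2.1 = G.W k ∧ (G.E u.1).2 = v)

variable {G}

lemma vp_of_coord_zero {v : G.V} {u : G.Un} (h : u.2.1 = 0) :
    VP G v u ↔ (G.E u.1).1 = v := by
  constructor
  · rintro (⟨_, h1⟩ | ⟨k, _, hk, _⟩)
    · exact h1
    · exact absurd (hk.symm.trans h) (G.W_pos k).ne'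
  · exact fun h1 => Or.inl ⟨h, h1⟩

lemma vp_of_coord_top {v : G.V} {u : G.Un} (h : u.2.1 = G.W u.1) :
    VP G v u ↔ (G.E u.1).2 = v := by
  constructor
  · rintro (⟨h0, _⟩ | ⟨k, _, _, h2⟩)
    · exact absurd (h0.symm.trans h) (G.W_pos u.1).ne
    · exact h2
  · intro h2; exact Or.inr ⟨u.1, rfl, h, h2⟩

lemma vp_netRel {v : G.V} {u w : G.Un} (h : G.netRel u w) : VP G v u ↔ VP G v w := by
  rcases h with ⟨hc, hE⟩ | ⟨h1, h2, h3⟩ | ⟨h1, h2, h3⟩ | ⟨h1, h2, h3⟩ | ⟨h1, h2, h3⟩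
  · unfold VP; rw [hc, hE]
  · rw [vp_of_coord_zero h1, vp_of_coord_zero h2, h3]
  · rw [vp_of_coord_zero h1, vp_of_coord_top h2, h3]
  · rw [vp_of_coord_top h1, vp_of_coord_zero h2, h3]
  · rw [vp_of_coord_top h1, vp_of_coord_top h2, h3]

/-- Every vertex point is one netRel step from an honest endpoint with the same label. -/
lemma vp_to_endpoint {v : G.V} {a : G.Un} (ha : VP G v a) :
    ∃ a' : G.Un, G.netRel a a' ∧
      ((a'.2.1 = 0 ∧ (G.E a'.1).1 = v) ∨ (a'.2.1 = G.W a'.1 ∧ (G.E a'.1).2 = v)) := by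
  rcases ha with ⟨h0, h1⟩ | ⟨k, hk, hw, h2⟩
  · exact ⟨a, Or.inl ⟨rfl, rfl⟩, Or.inl ⟨h0, h1⟩⟩
  · refine ⟨⟨k, ⟨G.W k, ⟨(G.W_pos k).le, le_rfl⟩⟩⟩, Or.inl ⟨hw, hk.symm⟩, Or.inr ⟨rfl, ?_⟩⟩
    rw [hk]; exact h2

/-- Any two vertex points with the same label are glued. -/
lemma vp_eqvGen {v : G.V} {a b : G.Un} (ha : VP G v a) (hb : VP G v b) :
    Relation.EqvGen G.netRel a b := by
  obtain ⟨a', haa, ha'⟩ := vp_to_endpoint ha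
  obtain ⟨b', hbb, hb'⟩ := vp_to_endpoint hb
  have hab : G.netRel a' b' := by
    rcases ha' with ⟨h1, h2⟩ | ⟨h1, h2⟩ <;> rcases hb' with ⟨h3, h4⟩ | ⟨h3, h4⟩
    · exact Or.inr (Or.inl ⟨h1, h3, h2.trans h4.symm⟩)
    · exact Or.inr (Or.inr (Or.inl ⟨h1, h3, h2.trans h4.symm⟩))
    · exact Or.inr (Or.inr (Or.inr (Or.inl ⟨h1, h3, h2.trans h4.symm⟩)))
    · exact Or.inr (Or.inr (Or.inr (Or.inr ⟨h1, h3, h2.trans h4.symm⟩)))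
  exact .trans _ _ _ (.rel _ _ haa)
    (.trans _ _ _ (.rel _ _ hab) (.symm _ _ (.rel _ _ hbb)))

/-- The set of edges with a given endpoint pair is finite. -/
lemma fin_parallel (hG : G.IsRegular) (e : G.V × G.V) : {k : G.K | G.E k = e}.Finite := by
  by_cases hne : ∃ k0, G.E k0 = e
  · obtain ⟨k0, hk0⟩ := hne
    set w : G.Net := Quotient.mk G.netSetoid ⟨k0, ⟨0, ⟨le_refl 0, (G.W_pos k0).le⟩⟩⟩ with hw
    have hwv : G.IsVertex w := ⟨_, rfl, Or.inl rfl⟩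
    refine (hG.locFin w hwv).subset ?_
    intro k hk
    refine ⟨⟨k, ⟨0, ⟨le_refl 0, (G.W_pos k).le⟩⟩⟩, rfl, ?_⟩
    exact Quotient.sound (Relation.EqvGen.rel _ _
      (Or.inr (Or.inl ⟨rfl, rfl, by rw [hk, hk0]⟩)))
  · have : {k : G.K | G.E k = e} = ∅ := by
      ext k; simp only [Set.mem_setOf_eq, Set.mem_empty_iff_false, iff_false]
      exact fun h => hne ⟨k, h⟩
    rw [this]; exact Set.finite_empty

/-- The set of edges incident to a given glued vertex is finite. -/
lemma fin_incident (hG : G.IsRegular) {v : G.V} {u0 : G.Un} (h0 : VP G v u0) :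
    {k : G.K | (G.E k).1 = v ∨ (G.E k).2 = v}.Finite := by
  set w : G.Net := Quotient.mk G.netSetoid u0 with hw
  obtain ⟨u0', hrel, hend⟩ := vp_to_endpoint h0
  have hwv : G.IsVertex w := by
    refine ⟨u0', Quotient.sound (Relation.EqvGen.symm _ _ (.rel _ _ hrel)), ?_⟩
    rcases hend with ⟨h, _⟩ | ⟨h, _⟩
    · exact Or.inl h
    · exact Or.inr h
  refine (hG.locFin w hwv).subset ?_
  intro k hk
  rcases hk with hk | hk
  · refine ⟨⟨k, ⟨0, ⟨le_refl 0, (G.W_pos k).le⟩⟩⟩, rfl, Quotient.sound ?_⟩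
    exact vp_eqvGen (v := v) (Or.inl ⟨rfl, hk⟩) h0
  · refine ⟨⟨k, ⟨G.W k, ⟨(G.W_pos k).le, le_rfl⟩⟩⟩, rfl, Quotient.sound ?_⟩
    exact vp_eqvGen (v := v) (Or.inr ⟨k, rfl, rfl, hk⟩) h0

lemma lip_min_aux (c x y : ℝ) : min c x ≤ min c y + |x - y| := by
  have h1 : x ≤ y + |x - y| := by
    have := le_abs_self (x - y); linarith
  calc min c x ≤ min (c + |x - y|) (y + |x - y|) :=
        min_le_min (le_add_of_nonneg_right (abs_nonneg _)) h1
    _ = min c y + |x - y| := min_add_add_right c y _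

lemma lip_min (c x y : ℝ) : |min c x - min c y| ≤ |x - y| := by
  rw [abs_sub_le_iff]
  constructor
  · have := lip_min_aux c x y; linarith
  · have := lip_min_aux c y x; rw [abs_sub_comm] at this; linarith

end Aux


section Sep

variable {G : WeightedGraph}

/-- Separation: if `p` and `q` are not glued, there is a netRel-invariant,
edgewise-Lipschitz function vanishing at `p` and positive at `q`. -/
lemma sep (hG : G.IsRegular) (p q : G.Un) (hpq : ¬ Relation.EqvGen G.netRel p q) :
    ∃ f : G.Un → ℝ, f p = 0 ∧ 0 < f q ∧ (∀ u w, G.netRel u w → f u = f w) ∧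
      (∀ u w : G.Un, u.1 = w.1 → |f u - f w| ≤ |u.2.1 - w.2.1|) := by
  classical
  obtain ⟨ε, hε, hεW⟩ := hG.lb
  by_cases hB : ∃ (v : G.V) (u0 : G.Un), Relation.EqvGen G.netRel p u0 ∧ VP G v u0
  · -- Case B : the class of p is a vertex class
    obtain ⟨v, u0, hpu0, hu0⟩ := hB
    have hKvfin : {k : G.K | (G.E k).1 = v ∨ (G.E k).2 = v}.Finite := fin_incident hG hu0
    set Kv : Set G.K := {k | (G.E k).1 = v ∨ (G.E k).2 = v} with hKvdef
    set Z : G.V × G.V → Set ℝ := fun e =>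
      {z | (z = 0 ∧ e.1 = v) ∨ ∃ k, G.E k = e ∧ z = G.W k ∧ e.2 = v} with hZ
    have hZfin : ∀ e, (Z e).Finite := by
      intro e
      refine Set.Finite.subset (((fin_parallel hG e).image G.W).insert 0) ?_
      rintro z (⟨hz, _⟩ | ⟨k, hk, hz, _⟩)
      · simp [hz]
      · exact Set.mem_insert_of_mem _ ⟨k, hk, hz.symm⟩
    set dv : G.Un → ℝ := fun u =>
      if _ : (Z (G.E u.1)).Nonempty then sInf ((fun z => |u.2.1 - z|) '' Z (G.E u.1))
      else ε with hdv
    have hdv_le : ∀ (u : G.Un) (z : ℝ), z ∈ Z (G.E u.1) → dv u ≤ |u.2.1 - z| := by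
      intro u z hz
      simp only [hdv]
      rw [dif_pos ⟨z, hz⟩]
      exact csInf_le ((hZfin _).image _).bddBelow ⟨z, hz, rfl⟩
    have hdv_nonneg : ∀ u, 0 ≤ dv u := by
      intro u; simp only [hdv]
      split_ifs with h
      · exact le_csInf (h.image _) (by rintro b ⟨z, _, rfl⟩; exact abs_nonneg _)
      · exact hε.le
    have hdv_mem : ∀ u : G.Un, (Z (G.E u.1)).Nonempty →
        ∃ z ∈ Z (G.E u.1), dv u = |u.2.1 - z| := by
      intro u h
      obtain ⟨z, hz, hz2⟩ :=
        (h.image (fun z => |u.2.1 - z|)).csInf_mem ((hZfin _).image _)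
      exact ⟨z, hz, by simp only [hdv]; rw [dif_pos h]; exact hz2.symm⟩
    set L : Set ℝ := (fun ab : G.K × G.K => |G.W ab.1 - G.W ab.2|) ''
        {ab | ab.1 ∈ Kv ∧ ab.2 ∈ Kv ∧ G.W ab.1 ≠ G.W ab.2} with hL
    have hLfin : L.Finite := by
      refine Set.Finite.image _ (Set.Finite.subset (hKvfin.prod hKvfin) ?_)
      rintro ⟨a, b⟩ ⟨ha, hb, _⟩; exact ⟨ha, hb⟩
    set δ : ℝ := if hLne : L.Nonempty then min ε (sInf L) else ε with hδdef
    have hδε : δ ≤ ε := by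
      rw [hδdef]; split_ifs
      exacts [min_le_left _ _, le_rfl]
    have hδL : ∀ r ∈ L, δ ≤ r := by
      intro r hr
      rw [hδdef, dif_pos ⟨r, hr⟩]
      exact le_trans (min_le_right _ _) (csInf_le hLfin.bddBelow hr)
    have hδ : 0 < δ := by
      rw [hδdef]; split_ifs with hLne
      · refine lt_min hε ?_
        obtain ⟨⟨a, b⟩, ⟨_, _, hne⟩, heq⟩ := hLne.csInf_mem hLfin
        rw [← heq]
        exact abs_pos.2 (sub_ne_zero.2 hne)
      · exact hε
    have hvp_zero : ∀ u : G.Un, VP G v u → min δ (dv u) = 0 := by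
      intro u hu
      have hmem : u.2.1 ∈ Z (G.E u.1) := by
        rcases hu with ⟨h0, h1⟩ | ⟨k, hk, hw, h2⟩
        · exact Or.inl ⟨h0, h1⟩
        · exact Or.inr ⟨k, hk, hw, h2⟩
      have h1 : dv u ≤ 0 := by simpa using hdv_le u _ hmem
      rw [le_antisymm h1 (hdv_nonneg u), min_eq_right hδ.le]
    have hend1 : ∀ u : G.Un, (u.2.1 = 0 ∨ u.2.1 = G.W u.1) → ¬ VP G v u →
        min δ (dv u) = δ := by
      intro u hu hnvp
      refine min_eq_left ?_
      simp only [hdv]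
      split_ifs with hne
      · refine le_csInf (hne.image _) ?_
        rintro b ⟨z, hz, rfl⟩
        show δ ≤ |u.2.1 - z|
        rcases hu with hu | hu
        · rcases hz with ⟨hz0, hz1⟩ | ⟨k, hk, hz, h2⟩
          · exact absurd ((vp_of_coord_zero hu).2 hz1) hnvp
          · rw [hu, hz, zero_sub, abs_neg, abs_of_pos (G.W_pos k)]
            exact hδε.trans (hεW k)
        · rcases hz with ⟨hz0, hz1⟩ | ⟨k, hk, hz, h2⟩
          · rw [hu, hz0, sub_zero, abs_of_pos (G.W_pos u.1)]
            exact hδε.trans (hεW u.1)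
          · have hne' : G.W u.1 ≠ G.W k := by
              intro hh
              exact hnvp (Or.inr ⟨k, hk, hu.trans hh, h2⟩)
            have hu1 : u.1 ∈ Kv := Or.inr h2
            have hk1 : k ∈ Kv := Or.inr (by rw [hk]; exact h2)
            have : |G.W u.1 - G.W k| ∈ L := ⟨(u.1, k), ⟨hu1, hk1, hne'⟩, rfl⟩
            rw [hu, hz]
            exact hδL _ this
      · exact hδε
    have hinv : ∀ u w, G.netRel u w → min δ (dv u) = min δ (dv w) := by
      intro u w h
      rcases h with ⟨hc, hE⟩ | h
      · have : dv u = dv w := by simp only [hdv]; rw [hE, hc]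
        rw [this]
      · have hu : u.2.1 = 0 ∨ u.2.1 = G.W u.1 := by
          rcases h with ⟨h1, _, _⟩ | ⟨h1, _, _⟩ | ⟨h1, _, _⟩ | ⟨h1, _, _⟩ <;>
            [exact Or.inl h1; exact Or.inl h1; exact Or.inr h1; exact Or.inr h1]
        have hw : w.2.1 = 0 ∨ w.2.1 = G.W w.1 := by
          rcases h with ⟨_, h2, _⟩ | ⟨_, h2, _⟩ | ⟨_, h2, _⟩ | ⟨_, h2, _⟩ <;>
            [exact Or.inl h2; exact Or.inr h2; exact Or.inl h2; exact Or.inr h2]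
        have hvp : VP G v u ↔ VP G v w := vp_netRel (Or.inr h)
        by_cases hvpu : VP G v u
        · rw [hvp_zero u hvpu, hvp_zero w (hvp.1 hvpu)]
        · rw [hend1 u hu hvpu, hend1 w hw (fun hh => hvpu (hvp.2 hh))]
    have hEqv : ∀ a b, Relation.EqvGen G.netRel a b → min δ (dv a) = min δ (dv b) := by
      intro a b h
      induction h with
      | rel a b h => exact hinv a b h
      | refl a => rfl
      | symm a b _ ih => exact ih.symm
      | trans a b c _ _ ih1 ih2 => exact ih1.trans ih2
    have hdvlip1 : ∀ u w : G.Un, u.1 = w.1 → dv u ≤ dv w + |u.2.1 - w.2.1| := by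
      intro u w h1
      have hE : G.E u.1 = G.E w.1 := by rw [h1]
      by_cases hne : (Z (G.E w.1)).Nonempty
      · obtain ⟨z, hz, heq⟩ := hdv_mem w hne
        have hz' : z ∈ Z (G.E u.1) := by rw [hE]; exact hz
        have hle := hdv_le u z hz'
        have h3 := abs_sub_le u.2.1 w.2.1 z
        linarith
      · have hne' : ¬ (Z (G.E u.1)).Nonempty := by rw [hE]; exact hne
        have h2 : dv u = ε := by simp only [hdv]; rw [dif_neg hne']
        have h3 : dv w = ε := by simp only [hdv]; rw [dif_neg hne]
        rw [h2, h3]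
        linarith [abs_nonneg (u.2.1 - w.2.1)]
    refine ⟨fun u => min δ (dv u), (hEqv p u0 hpu0).trans (hvp_zero u0 hu0), ?_, hinv, ?_⟩
    · refine lt_min hδ ?_
      rcases (hdv_nonneg q).lt_or_eq with h | h
      · exact h
      exfalso
      by_cases hne : (Z (G.E q.1)).Nonempty
      · obtain ⟨z, hz, heq⟩ := hdv_mem q hne
        have hz0 : q.2.1 = z := by
          have : |q.2.1 - z| = 0 := by rw [← heq, ← h]
          exact sub_eq_zero.1 (abs_eq_zero.1 this)
        have hq : VP G v q := by
          rcases hz with ⟨h0, h1⟩ | ⟨k, hk, hw, h2⟩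
          · exact Or.inl ⟨hz0.trans h0, h1⟩
          · exact Or.inr ⟨k, hk, hz0.trans hw, h2⟩
        exact hpq (.trans _ _ _ hpu0 (.symm _ _ (vp_eqvGen hq hu0)))
      · have h2 : dv q = ε := by simp only [hdv]; rw [dif_neg hne]
        rw [h2] at h
        exact hε.ne h
    · intro u w h1
      refine le_trans (lip_min δ _ _) ?_
      rw [abs_sub_le_iff]
      constructor
      · have := hdvlip1 u w h1; linarith
      · have := hdvlip1 w u h1.symm
        rw [abs_sub_comm] at this; linarith
  · -- Case A : the class of p is an interior point
    have hnvp : ∀ v, ¬ VP G v p := fun v h => hB ⟨v, p, .refl p, h⟩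
    have ht0 : p.2.1 ≠ 0 := fun h => hnvp (G.E p.1).1 (Or.inl ⟨h, rfl⟩)
    have htW : ∀ k, G.E k = G.E p.1 → p.2.1 ≠ G.W k :=
      fun k hk h => hnvp (G.E p.1).2 (Or.inr ⟨k, hk, h, rfl⟩)
    set t := p.2.1 with hts
    have ht : 0 < t := lt_of_le_of_ne p.2.2.1 (Ne.symm ht0)
    have hPfin := fin_parallel hG (G.E p.1)
    have hmemP : p.1 ∈ hPfin.toFinset := by simp [Set.Finite.mem_toFinset]
    set m := hPfin.toFinset.inf' ⟨p.1, hmemP⟩ (fun k => |G.W k - t|) with hm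
    have hmpos : 0 < m := by
      rw [hm]; refine (Finset.lt_inf'_iff ..).2 ?_
      intro k hk
      have hkE : G.E k = G.E p.1 := by simpa [Set.Finite.mem_toFinset] using hk
      exact abs_pos.2 (sub_ne_zero.2 fun h => htW k hkE h.symm)
    set δ := min t m with hδdef
    have hδ : 0 < δ := lt_min ht hmpos
    refine ⟨fun u => if G.E u.1 = G.E p.1 then min δ |u.2.1 - t| else δ, ?_, ?_, ?_, ?_⟩
    · beta_reduce
      rw [if_pos rfl]
      show min δ |t - t| = 0; rw [sub_self, abs_zero, min_eq_right hδ.le]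
    · beta_reduce
      by_cases hc : G.E q.1 = G.E p.1
      · rw [if_pos hc]
        refine lt_min hδ (abs_pos.2 (sub_ne_zero.2 fun h => ?_))
        exact hpq (.rel _ _ (Or.inl ⟨h.symm, hc.symm⟩))
      · rw [if_neg hc]; exact hδ
    · have hend : ∀ u : G.Un, (u.2.1 = 0 ∨ u.2.1 = G.W u.1) →
          (if G.E u.1 = G.E p.1 then min δ |u.2.1 - t| else δ) = δ := by
        intro u hu
        by_cases hE : G.E u.1 = G.E p.1
        · rw [if_pos hE]
          rcases hu with hu | hu
          · rw [hu, zero_sub, abs_neg, abs_of_pos ht]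
            exact min_eq_left (min_le_left t m)
          · rw [hu]
            refine min_eq_left (le_trans (min_le_right t m) ?_)
            exact Finset.inf'_le _ (by simp [Set.Finite.mem_toFinset, hE])
        · rw [if_neg hE]
      intro u w h
      beta_reduce
      rcases h with ⟨hc, hE⟩ | h
      · simp only [hc, hE]
      · have hu : u.2.1 = 0 ∨ u.2.1 = G.W u.1 := by
          rcases h with ⟨h1, _, _⟩ | ⟨h1, _, _⟩ | ⟨h1, _, _⟩ | ⟨h1, _, _⟩ <;>
            [exact Or.inl h1; exact Or.inl h1; exact Or.inr h1; exact Or.inr h1]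
        have hw : w.2.1 = 0 ∨ w.2.1 = G.W w.1 := by
          rcases h with ⟨_, h2, _⟩ | ⟨_, h2, _⟩ | ⟨_, h2, _⟩ | ⟨_, h2, _⟩ <;>
            [exact Or.inl h2; exact Or.inr h2; exact Or.inl h2; exact Or.inr h2]
        rw [hend u hu, hend w hw]
    · intro u w h1
      beta_reduce
      have hE : G.E u.1 = G.E w.1 := by rw [h1]
      by_cases hc : G.E u.1 = G.E p.1
      · rw [if_pos hc, if_pos (hE.symm.trans hc)]
        refine le_trans (lip_min δ _ _) (le_trans (abs_abs_sub_abs_le_abs_sub _ _) ?_)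
        have : u.2.1 - t - (w.2.1 - t) = u.2.1 - w.2.1 := by ring
        rw [this]
      · rw [if_neg hc, if_neg (fun h => hc (hE.trans h))]
        simp [abs_nonneg]

end Sep


/-- In a regular network, the path distance satisfies the identity of
indiscernibles. -/
theorem netDist_eq_zero_iff (G : WeightedGraph) (hG : G.IsRegular) (x y : G.Net) :
    G.netDist x y = 0 ↔ x = y := by
  constructor
  · intro h0
    by_contra hxy
    have hout : ¬ Relation.EqvGen G.netRel (Quotient.out x) (Quotient.out y) := by
      intro h
      exact hxy (by rw [← Quotient.out_eq x, ← Quotient.out_eq y]; exact Quotient.sound h)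
    obtain ⟨f, hfp, hfq, hinv, hlip⟩ := sep hG _ _ hout
    have hEqv : ∀ a b, Relation.EqvGen G.netRel a b → f a = f b := by
      intro a b h
      induction h with
      | rel a b h => exact hinv a b h
      | refl a => rfl
      | symm a b _ ih => exact ih.symm
      | trans a b c _ _ ih1 ih2 => exact ih1.trans ih2
    have hstep : ∀ u w : G.Un, ENNReal.ofReal (f w) ≤ ENNReal.ofReal (f u) + G.d' u w := by
      intro u w
      by_cases h : u.1 = w.1
      · have h2 : G.d' u w = ENNReal.ofReal |u.2.1 - w.2.1| := by
          simp [WeightedGraph.d', h]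
        rw [h2]
        have h3 : f w ≤ f u + |u.2.1 - w.2.1| := by
          have h4 := hlip u w h; rw [abs_sub_le_iff] at h4; linarith [h4.2]
        calc ENNReal.ofReal (f w) ≤ ENNReal.ofReal (f u + |u.2.1 - w.2.1|) :=
              ENNReal.ofReal_le_ofReal h3
          _ ≤ _ := ENNReal.ofReal_add_le
      · have h2 : G.d' u w = ⊤ := by simp [WeightedGraph.d', h]
        rw [h2, add_top]; exact le_top
    have hmain : ENNReal.ofReal (f (Quotient.out y)) ≤ G.netDist x y := by
      unfold WeightedGraph.netDist WeightedGraph.chainDist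
      refine le_iInf fun n => le_iInf fun ps => le_iInf fun qs => le_iInf fun h1 =>
        le_iInf fun h2 => le_iInf fun h3 => ?_
      have h1' : Relation.EqvGen G.netRel (Quotient.out x) (ps 0) := h1
      have h2' : Relation.EqvGen G.netRel (Quotient.out y) (qs (Fin.last n)) := h2
      have h3' : ∀ i : Fin n, Relation.EqvGen G.netRel (qs i.castSucc) (ps i.succ) := h3
      set PS : ℕ → G.Un :=
        fun i => ps ⟨min i n, Nat.lt_succ_of_le (Nat.min_le_right _ _)⟩ with hPS
      set QS : ℕ → G.Un :=
        fun i => qs ⟨min i n, Nat.lt_succ_of_le (Nat.min_le_right _ _)⟩ with hQS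
      have hPS0 : PS 0 = ps 0 := by
        simp only [hPS]; congr 1
      have key : ∀ j, j ≤ n →
          ENNReal.ofReal (f (QS j)) ≤ ∑ i ∈ Finset.range (j + 1), G.d' (PS i) (QS i) := by
        intro j
        induction j with
        | zero =>
          intro _
          rw [Finset.sum_range_one]
          have hz : f (PS 0) = 0 := by rw [hPS0, ← hEqv _ _ h1', hfp]
          calc ENNReal.ofReal (f (QS 0))
              ≤ ENNReal.ofReal (f (PS 0)) + G.d' (PS 0) (QS 0) := hstep _ _
            _ = G.d' (PS 0) (QS 0) := by rw [hz]; simp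
        | succ j ih =>
          intro hj
          have hj' : j ≤ n := by omega
          have hlink : Relation.EqvGen G.netRel (QS j) (PS (j + 1)) := by
            have hstep3 := h3' ⟨j, by omega⟩
            have e1 : ((⟨j, by omega⟩ : Fin n).castSucc : Fin (n + 1)) =
                ⟨min j n, Nat.lt_succ_of_le (Nat.min_le_right _ _)⟩ :=
              Fin.ext (by simp; omega)
            have e2 : ((⟨j, by omega⟩ : Fin n).succ : Fin (n + 1)) =
                ⟨min (j + 1) n, Nat.lt_succ_of_le (Nat.min_le_right _ _)⟩ :=
              Fin.ext (by simp; omega)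
            rw [e1, e2] at hstep3
            exact hstep3
          calc ENNReal.ofReal (f (QS (j + 1)))
              ≤ ENNReal.ofReal (f (PS (j + 1))) + G.d' (PS (j + 1)) (QS (j + 1)) := hstep _ _
            _ = ENNReal.ofReal (f (QS j)) + G.d' (PS (j + 1)) (QS (j + 1)) := by
                rw [← hEqv _ _ hlink]
            _ ≤ (∑ i ∈ Finset.range (j + 1), G.d' (PS i) (QS i))
                  + G.d' (PS (j + 1)) (QS (j + 1)) := by
                gcongr
                exact ih hj'
            _ = ∑ i ∈ Finset.range (j + 2), G.d' (PS i) (QS i) :=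
                (Finset.sum_range_succ _ _).symm
      have hfy : f (Quotient.out y) = f (QS n) := by
        have hQn : QS n = qs (Fin.last n) := by
          simp only [hQS]; congr 1; exact Fin.ext (by simp [Fin.last])
        rw [hQn]; exact hEqv _ _ h2'
      have hsum : ∑ i ∈ Finset.range (n + 1), G.d' (PS i) (QS i)
          = ∑ i : Fin (n + 1), G.d' (ps i) (qs i) := by
        rw [← Fin.sum_univ_eq_sum_range (fun i => G.d' (PS i) (QS i)) (n + 1)]
        refine Finset.sum_congr rfl fun i _ => ?_
        have hlt : (i : ℕ) ≤ n := Nat.lt_succ_iff.mp i.isLt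
        have hp : PS i.1 = ps i := by
          simp only [hPS]; congr 1; exact Fin.ext (by simp [Nat.min_eq_left hlt])
        have hq : QS i.1 = qs i := by
          simp only [hQS]; congr 1; exact Fin.ext (by simp [Nat.min_eq_left hlt])
        rw [hp, hq]
      rw [hfy]
      calc ENNReal.ofReal (f (QS n)) ≤ _ := key n le_rfl
        _ = _ := hsum
    rw [h0] at hmain
    exact absurd (le_antisymm hmain (zero_le)) (ENNReal.ofReal_pos.2 hfq).ne'
  · rintro rfl
    refine le_antisymm ?_ (zero_le)
    unfold WeightedGraph.netDist WeightedGraph.chainDist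
    refine le_trans (iInf_le_of_le 0 (iInf_le_of_le (fun _ => Quotient.out x)
      (iInf_le_of_le (fun _ => Quotient.out x)
      (iInf_le_of_le (Relation.EqvGen.refl _)
      (iInf_le_of_le (Relation.EqvGen.refl _)
      (iInf_le_of_le (fun i => i.elim0) le_rfl)))))) ?_
    simp [WeightedGraph.d']
end

section
/- A regular network is a Polish space: path-connected, complete, locally compact, and separable. -/
open MeasureTheory Set Filter Topology
open scoped ENNReal

namespace WeightedGraph

variable (G : WeightedGraph)

/-- The equivalence relation generated by the gluing relation. -/
def Rel (p q : G.Un) : Prop := Relation.EqvGen G.netRel p q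

lemma rel_refl (p : G.Un) : G.Rel p p := Relation.EqvGen.refl p

lemma rel_symm {p q : G.Un} (h : G.Rel p q) : G.Rel q p := Relation.EqvGen.symm _ _ h

lemma rel_trans {p q r : G.Un} (h : G.Rel p q) (h' : G.Rel q r) : G.Rel p r :=
  Relation.EqvGen.trans _ _ _ h h'

lemma netSetoid_r_eq : G.netSetoid.r = G.Rel := rfl

/-- ℕ-indexed version of the chain distance. -/
noncomputable def dN (x y : G.Un) : ℝ≥0∞ :=
  ⨅ (n : ℕ) (p : ℕ → G.Un) (q : ℕ → G.Un) (_ : G.Rel x (p 0)) (_ : G.Rel y (q n))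
    (_ : ∀ i < n, G.Rel (q i) (p (i+1))), ∑ i ∈ Finset.range (n+1), G.d' (p i) (q i)

lemma chainDist_eq_dN (x y : G.Un) : G.chainDist G.netSetoid.r x y = G.dN x y := by
  apply le_antisymm
  · refine le_iInf fun n => le_iInf fun p => le_iInf fun q => le_iInf fun h1 =>
      le_iInf fun h2 => le_iInf fun h3 => ?_
    refine iInf_le_of_le n (iInf_le_of_le (fun i => p i.val)
      (iInf_le_of_le (fun i => q i.val) ?_))
    refine iInf_le_of_le h1 (iInf_le_of_le h2 (iInf_le_of_le ?_ ?_))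
    · intro i
      exact h3 i.val i.isLt
    · exact le_of_eq (Fin.sum_univ_eq_sum_range (fun i => G.d' (p i) (q i)) (n+1))
  · refine le_iInf fun n => le_iInf fun p => le_iInf fun q => le_iInf fun h1 =>
      le_iInf fun h2 => le_iInf fun h3 => ?_
    classical
    set p' : ℕ → G.Un := fun i => if h : i < n + 1 then p ⟨i, h⟩ else p 0 with hp'
    set q' : ℕ → G.Un := fun i => if h : i < n + 1 then q ⟨i, h⟩ else q 0 with hq'
    refine iInf_le_of_le n (iInf_le_of_le p' (iInf_le_of_le q' ?_))
    have e0 : p' 0 = p 0 := by simp [hp']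
    have en : q' n = q (Fin.last n) := by simp [hq', Fin.last]
    refine iInf_le_of_le (e0 ▸ h1) (iInf_le_of_le (en ▸ h2) (iInf_le_of_le ?_ ?_))
    · intro i hi
      have e1 : q' i = q ((⟨i, hi⟩ : Fin n).castSucc) := by
        simp only [hq', dif_pos (Nat.lt_succ_of_lt hi)]
        congr 1
      have e2 : p' (i + 1) = p ((⟨i, hi⟩ : Fin n).succ) := by
        simp only [hp', dif_pos (Nat.succ_lt_succ hi)]
        congr 1
      rw [e1, e2]
      exact h3 ⟨i, hi⟩
    · rw [← Fin.sum_univ_eq_sum_range]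
      apply le_of_eq
      refine Finset.sum_congr rfl fun i _ => ?_
      have : p' i.val = p i := by simp only [hp']; exact dif_pos i.isLt
      have h2' : q' i.val = q i := by simp only [hq']; exact dif_pos i.isLt
      rw [this, h2']

lemma netDist_eq (x y : G.Net) : G.netDist x y = G.dN x.out y.out := by
  rw [netDist, chainDist_eq_dN]

/-- The distance is at most each single-segment value. -/
lemma dN_le_single {x y p q : G.Un} (hx : G.Rel x p) (hy : G.Rel y q) :
    G.dN x y ≤ G.d' p q := by
  refine iInf_le_of_le 0 (iInf_le_of_le (fun _ => p) (iInf_le_of_le (fun _ => q) ?_))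
  refine iInf_le_of_le hx (iInf_le_of_le hy (iInf_le_of_le (fun i hi => absurd hi (by omega)) ?_))
  simp

lemma d'_self (p : G.Un) : G.d' p p = 0 := by simp [d']

lemma d'_comm (p q : G.Un) : G.d' p q = G.d' q p := by
  unfold d'
  rcases eq_or_ne p.1 q.1 with h | h
  · rw [if_pos h, if_pos h.symm, abs_sub_comm]
  · rw [if_neg h, if_neg (Ne.symm h)]

lemma dN_self_of_rel {x y : G.Un} (h : G.Rel x y) : G.dN x y = 0 :=
  le_antisymm (by simpa [d'_self] using G.dN_le_single (G.rel_refl x) (G.rel_symm h)) zero_le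

lemma dN_le_of_rel_left {x x' y : G.Un} (h : G.Rel x x') : G.dN x' y ≤ G.dN x y := by
  refine le_iInf fun n => le_iInf fun p => le_iInf fun q => le_iInf fun h1 =>
    le_iInf fun h2 => le_iInf fun h3 => ?_
  exact iInf_le_of_le n (iInf_le_of_le p (iInf_le_of_le q (iInf_le_of_le
    (G.rel_trans (G.rel_symm h) h1) (iInf_le_of_le h2 (iInf_le_of_le h3 le_rfl)))))

lemma dN_comm (x y : G.Un) : G.dN x y = G.dN y x := by
  have key : ∀ a b : G.Un, G.dN a b ≤ G.dN b a := by
    intro a b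
    refine le_iInf fun n => le_iInf fun p => le_iInf fun q => le_iInf fun h1 =>
      le_iInf fun h2 => le_iInf fun h3 => ?_
    refine iInf_le_of_le n (iInf_le_of_le (fun i => q (n - i)) (iInf_le_of_le
      (fun i => p (n - i)) ?_))
    refine iInf_le_of_le (by simpa using h2) (iInf_le_of_le (by simpa using h1)
      (iInf_le_of_le ?_ ?_))
    · intro i hi
      have h4 : n - i - 1 < n := by omega
      have h5 : n - i - 1 + 1 = n - i := by omega
      have hh := G.rel_symm (h3 (n - i - 1) h4)
      rw [h5] at hh
      show G.Rel (p (n - i)) (q (n - (i + 1)))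
      rw [show n - (i + 1) = n - i - 1 by omega]
      exact hh
    · show ∑ i ∈ Finset.range (n + 1), G.d' (q (n - i)) (p (n - i)) ≤ _
      apply le_of_eq
      have hrefl := Finset.sum_range_reflect (fun j => G.d' (q j) (p j)) (n + 1)
      simp only [Nat.add_sub_cancel] at hrefl
      calc ∑ i ∈ Finset.range (n + 1), G.d' (q (n - i)) (p (n - i))
          = ∑ i ∈ Finset.range (n + 1), G.d' (q i) (p i) := hrefl
        _ = _ := Finset.sum_congr rfl fun i _ => G.d'_comm _ _
  exact le_antisymm (key x y) (key y x)

lemma dN_congr {x x' y y' : G.Un} (hx : G.Rel x x') (hy : G.Rel y y') :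
    G.dN x y = G.dN x' y' := by
  apply le_antisymm
  · calc G.dN x y ≤ G.dN x' y := G.dN_le_of_rel_left (G.rel_symm hx)
    _ = G.dN y x' := G.dN_comm _ _
    _ ≤ G.dN y' x' := G.dN_le_of_rel_left (G.rel_symm hy)
    _ = G.dN x' y' := G.dN_comm _ _
  · calc G.dN x' y' ≤ G.dN x y' := G.dN_le_of_rel_left hx
    _ = G.dN y' x := G.dN_comm _ _
    _ ≤ G.dN y x := G.dN_le_of_rel_left hy
    _ = G.dN x y := G.dN_comm _ _


lemma dN_triangle (x y z : G.Un) : G.dN x z ≤ G.dN x y + G.dN y z := by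
  have key : ∀ (n1 : ℕ) (p1 q1 : ℕ → G.Un), G.Rel x (p1 0) → G.Rel y (q1 n1) →
      (∀ i < n1, G.Rel (q1 i) (p1 (i+1))) →
      ∀ (n2 : ℕ) (p2 q2 : ℕ → G.Un), G.Rel y (p2 0) → G.Rel z (q2 n2) →
      (∀ i < n2, G.Rel (q2 i) (p2 (i+1))) →
      G.dN x z ≤ ∑ i ∈ Finset.range (n1+1), G.d' (p1 i) (q1 i)
        + ∑ i ∈ Finset.range (n2+1), G.d' (p2 i) (q2 i) := by
    intro n1 p1 q1 a1 b1 l1 n2 p2 q2 a2 b2 l2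
    classical
    set p : ℕ → G.Un := fun i => if i ≤ n1 then p1 i else p2 (i - (n1+1)) with hp
    set q : ℕ → G.Un := fun i => if i ≤ n1 then q1 i else q2 (i - (n1+1)) with hq
    refine iInf_le_of_le (n1 + 1 + n2) (iInf_le_of_le p (iInf_le_of_le q ?_))
    have e0 : p 0 = p1 0 := if_pos (by omega)
    have en : q (n1+1+n2) = q2 n2 := by
      simp only [hq]; rw [if_neg (by omega)]; congr 1; omega
    refine iInf_le_of_le (e0 ▸ a1) (iInf_le_of_le (en ▸ b2) (iInf_le_of_le ?_ ?_))
    · intro i hi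
      rcases lt_trichotomy i n1 with h | h | h
      · have eq1 : q i = q1 i := if_pos (by omega)
        have eq2 : p (i+1) = p1 (i+1) := if_pos (by omega)
        rw [eq1, eq2]; exact l1 i h
      · have eq1 : q i = q1 n1 := by rw [h]; exact if_pos le_rfl
        have eq2 : p (i+1) = p2 0 := by
          simp only [hp]; rw [if_neg (by omega)]; congr 1; omega
        rw [eq1, eq2]; exact G.rel_trans (G.rel_symm b1) a2
      · have eq1 : q i = q2 (i - (n1+1)) := by simp only [hq]; rw [if_neg (by omega)]
        have eq2 : p (i+1) = p2 (i - (n1+1) + 1) := by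
          simp only [hp]; rw [if_neg (by omega)]; congr 1; omega
        rw [eq1, eq2]; exact l2 (i - (n1+1)) (by omega)
    · apply le_of_eq
      rw [show n1+1+n2+1 = (n1+1) + (n2+1) by omega, Finset.sum_range_add]
      congr 1
      · refine Finset.sum_congr rfl fun i hi => ?_
        rw [Finset.mem_range] at hi
        have eq1 : p i = p1 i := if_pos (by omega)
        have eq2 : q i = q1 i := if_pos (by omega)
        rw [eq1, eq2]
      · refine Finset.sum_congr rfl fun i hi => ?_
        have eq1 : p (n1+1+i) = p2 i := by
          simp only [hp]; rw [if_neg (by omega)]; congr 1; omega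
        have eq2 : q (n1+1+i) = q2 i := by
          simp only [hq]; rw [if_neg (by omega)]; congr 1; omega
        rw [eq1, eq2]
  rcases eq_or_ne (G.dN x y) ⊤ with h | h1
  · rw [h]; simp
  rcases eq_or_ne (G.dN y z) ⊤ with h | h2
  · rw [h]; simp
  refine ENNReal.le_of_forall_pos_le_add fun ε hε htop => ?_
  have hne : (ε : ℝ≥0∞) / 2 ≠ 0 := by
    simp only [ne_eq, ENNReal.div_eq_zero_iff, ENNReal.coe_eq_zero, not_or]
    exact ⟨hε.ne', by simp⟩
  obtain ⟨n1, p1, q1, a1, b1, l1, s1⟩ : ∃ (n : ℕ) (p : ℕ → G.Un) (q : ℕ → G.Un), G.Rel x (p 0) ∧ G.Rel y (q n) ∧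
      (∀ i < n, G.Rel (q i) (p (i+1))) ∧
      ∑ i ∈ Finset.range (n+1), G.d' (p i) (q i) < G.dN x y + ε / 2 := by
    have : G.dN x y < G.dN x y + ε / 2 := ENNReal.lt_add_right h1 hne
    conv at this => lhs; rw [dN]
    simp only [iInf_lt_iff] at this
    obtain ⟨n, p, q, h1', h2', h3', h4'⟩ := this
    exact ⟨n, p, q, h1', h2', h3', h4'⟩
  obtain ⟨n2, p2, q2, a2, b2, l2, s2⟩ : ∃ (n : ℕ) (p : ℕ → G.Un) (q : ℕ → G.Un), G.Rel y (p 0) ∧ G.Rel z (q n) ∧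
      (∀ i < n, G.Rel (q i) (p (i+1))) ∧
      ∑ i ∈ Finset.range (n+1), G.d' (p i) (q i) < G.dN y z + ε / 2 := by
    have : G.dN y z < G.dN y z + ε / 2 := ENNReal.lt_add_right h2 hne
    conv at this => lhs; rw [dN]
    simp only [iInf_lt_iff] at this
    obtain ⟨n, p, q, h1', h2', h3', h4'⟩ := this
    exact ⟨n, p, q, h1', h2', h3', h4'⟩
  calc G.dN x z ≤ _ + _ := key n1 p1 q1 a1 b1 l1 n2 p2 q2 a2 b2 l2
    _ ≤ (G.dN x y + ε / 2) + (G.dN y z + ε / 2) := add_le_add s1.le s2.le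
    _ = G.dN x y + G.dN y z + (ε / 2 + ε / 2) := by ring
    _ = G.dN x y + G.dN y z + ε := by rw [ENNReal.add_halves]

lemma exists_chain_of_lt {x y : G.Un} {c : ℝ≥0∞} (h : G.dN x y < c) :
    ∃ (n : ℕ) (p : ℕ → G.Un) (q : ℕ → G.Un), G.Rel x (p 0) ∧ G.Rel y (q n) ∧
      (∀ i < n, G.Rel (q i) (p (i+1))) ∧
      ∑ i ∈ Finset.range (n+1), G.d' (p i) (q i) < c := by
  rw [dN] at h
  simp only [iInf_lt_iff] at h
  obtain ⟨n, p, q, h1, h2, h3, h4⟩ := h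
  exact ⟨n, p, q, h1, h2, h3, h4⟩

lemma rel_invariant_of_netRel {F : G.Un → ℝ}
    (hinv : ∀ p q, G.netRel p q → F p = F q) :
    ∀ p q, G.Rel p q → F p = F q := by
  intro p q h
  induction h with
  | rel _ _ h => exact hinv _ _ h
  | refl => rfl
  | symm _ _ _ ih => exact ih.symm
  | trans _ _ _ _ _ ih1 ih2 => exact ih1.trans ih2

/-- Lower bound on the chain distance via invariant Lipschitz functions. -/
lemma ofReal_abs_sub_le_dN (F : G.Un → ℝ)
    (hinv : ∀ p q, G.netRel p q → F p = F q)
    (hlip : ∀ p q : G.Un, p.1 = q.1 → |F p - F q| ≤ |p.2.1 - q.2.1|)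
    (x y : G.Un) : ENNReal.ofReal |F x - F y| ≤ G.dN x y := by
  have hinv' := G.rel_invariant_of_netRel hinv
  have hseg : ∀ p q : G.Un, ENNReal.ofReal |F p - F q| ≤ G.d' p q := by
    intro p q
    unfold d'
    by_cases h : p.1 = q.1
    · rw [if_pos h]; exact ENNReal.ofReal_le_ofReal (hlip p q h)
    · rw [if_neg h]; exact le_top
  have key : ∀ n (p q : ℕ → G.Un), (∀ i < n, G.Rel (q i) (p (i+1))) →
      ENNReal.ofReal |F (p 0) - F (q n)| ≤ ∑ i ∈ Finset.range (n+1), G.d' (p i) (q i) := by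
    intro n
    induction n with
    | zero => intro p q _; simpa using hseg (p 0) (q 0)
    | succ m ih =>
      intro p q hl
      have h1 := ih p q (fun i hi => hl i (by omega))
      have h2 : F (q m) = F (p (m+1)) := hinv' _ _ (hl m (by omega))
      rw [Finset.sum_range_succ]
      calc ENNReal.ofReal |F (p 0) - F (q (m+1))|
          ≤ ENNReal.ofReal (|F (p 0) - F (q m)| + |F (p (m+1)) - F (q (m+1))|) := by
            apply ENNReal.ofReal_le_ofReal
            calc |F (p 0) - F (q (m+1))|
                ≤ |F (p 0) - F (q m)| + |F (q m) - F (q (m+1))| := abs_sub_le _ _ _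
              _ = |F (p 0) - F (q m)| + |F (p (m+1)) - F (q (m+1))| := by rw [h2]
        _ ≤ ENNReal.ofReal |F (p 0) - F (q m)|
            + ENNReal.ofReal |F (p (m+1)) - F (q (m+1))| := ENNReal.ofReal_add_le
        _ ≤ _ := add_le_add h1 (hseg _ _)
  refine le_iInf fun n => le_iInf fun p => le_iInf fun q => le_iInf fun h1 =>
    le_iInf fun h2 => le_iInf fun h3 => ?_
  calc ENNReal.ofReal |F x - F y| = ENNReal.ofReal |F (p 0) - F (q n)| := by
        rw [hinv' _ _ h1, hinv' _ _ h2]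
    _ ≤ _ := key n p q h3

lemma rel_out_mk (p : G.Un) : G.Rel (Quotient.mk G.netSetoid p).out p := by
  have h : Quotient.mk G.netSetoid (Quotient.mk G.netSetoid p).out
      = Quotient.mk G.netSetoid p := Quotient.out_eq _
  exact Quotient.exact h

lemma mk_eq_of_rel {p q : G.Un} (h : G.Rel p q) :
    Quotient.mk G.netSetoid p = Quotient.mk G.netSetoid q := Quotient.sound h

/-- `Quotient.mk` with the right type ascription. -/
def mkN (p : G.Un) : G.Net := Quotient.mk G.netSetoid p

lemma mkN_eq_of_rel {p q : G.Un} (h : G.Rel p q) : G.mkN p = G.mkN q := Quotient.sound h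

lemma out_mkN (x : G.Net) : G.mkN x.out = x := Quotient.out_eq x

lemma netDist_mk_mk (p q : G.Un) :
    G.netDist (Quotient.mk G.netSetoid p) (Quotient.mk G.netSetoid q) = G.dN p q := by
  refine (G.netDist_eq _ _).trans ?_
  exact G.dN_congr (G.rel_out_mk p) (G.rel_out_mk q)

lemma netDist_self (x : G.Net) : G.netDist x x = 0 := by
  rw [netDist_eq]; exact G.dN_self_of_rel (G.rel_refl _)

lemma netDist_comm (x y : G.Net) : G.netDist x y = G.netDist y x := by
  rw [netDist_eq, netDist_eq]; exact G.dN_comm _ _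

lemma netDist_triangle (x y z : G.Net) :
    G.netDist x z ≤ G.netDist x y + G.netDist y z := by
  rw [netDist_eq, netDist_eq, netDist_eq]; exact G.dN_triangle _ _ _

lemma isOpen_iff' {U : Set G.Net} : IsOpen U ↔
    TopologicalSpace.GenerateOpen {s | ∃ x r, s = {y | G.netDist x y < r}} U := Iff.rfl

lemma isOpen_ball (x : G.Net) (r : ℝ≥0∞) : IsOpen {y | G.netDist x y < r} := by
  rw [isOpen_iff']
  exact .basic _ ⟨x, r, rfl⟩

lemma exists_ball_subset {U : Set G.Net} (hU : IsOpen U) :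
    ∀ {x}, x ∈ U → ∃ r, 0 < r ∧ {y | G.netDist x y < r} ⊆ U := by
  rw [isOpen_iff'] at hU
  induction hU with
  | @basic s hs =>
    intro x hx
    obtain ⟨z, ρ, rfl⟩ := hs
    have hzx : G.netDist z x < ρ := hx
    rcases eq_or_ne ρ ⊤ with rfl | hρ
    · refine ⟨⊤, by simp, fun y hy => ?_⟩
      have h1 : G.netDist z y ≤ G.netDist z x + G.netDist x y := G.netDist_triangle _ _ _
      have h2 : G.netDist z x + G.netDist x y < ⊤ :=
        ENNReal.add_lt_top.mpr ⟨hzx, hy⟩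
      exact lt_of_le_of_lt h1 h2
    · refine ⟨ρ - G.netDist z x, tsub_pos_iff_lt.mpr hzx, fun y hy => ?_⟩
      have h1 : G.netDist z y ≤ G.netDist z x + G.netDist x y := G.netDist_triangle _ _ _
      have h2 : G.netDist z x + G.netDist x y < G.netDist z x + (ρ - G.netDist z x) :=
        ENNReal.add_lt_add_left (hzx.trans_le le_top).ne hy
      have h3 : G.netDist z x + (ρ - G.netDist z x) = ρ := add_tsub_cancel_of_le hzx.le
      exact lt_of_le_of_lt h1 (h3 ▸ h2)
  | univ => exact fun _ => ⟨1, by norm_num, fun y _ => trivial⟩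
  | inter s t _ _ ihs iht =>
    intro x hx
    obtain ⟨r1, hr1, hb1⟩ := ihs hx.1
    obtain ⟨r2, hr2, hb2⟩ := iht hx.2
    exact ⟨min r1 r2, lt_min hr1 hr2, fun y hy =>
      ⟨hb1 (show G.netDist x y < r1 from lt_of_lt_of_le hy (min_le_left _ _)),
       hb2 (show G.netDist x y < r2 from lt_of_lt_of_le hy (min_le_right _ _))⟩⟩
  | sUnion S _ ih =>
    intro x hx
    obtain ⟨s, hs, hxs⟩ := hx
    obtain ⟨r, hr, hb⟩ := ih s hs hxs
    exact ⟨r, hr, fun y hy => ⟨s, hs, hb hy⟩⟩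

lemma exists_real_lt {r : ℝ≥0∞} (hr : 0 < r) : ∃ δ : ℝ, 0 < δ ∧ ENNReal.ofReal δ < r := by
  rcases eq_or_ne r ⊤ with rfl | hρ
  · exact ⟨1, by norm_num, by simp⟩
  · refine ⟨r.toReal / 2, ?_, ?_⟩
    · have : 0 < r.toReal := ENNReal.toReal_pos hr.ne' hρ
      linarith
    · rw [ENNReal.ofReal_lt_iff_lt_toReal (by positivity) hρ]
      have : 0 < r.toReal := ENNReal.toReal_pos hr.ne' hρ
      linarith

lemma edgeParam_lip (k : G.K) (s t : ℝ) :
    G.netDist (G.edgeParam k s) (G.edgeParam k t) ≤ ENNReal.ofReal |s - t| := by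
  refine (le_of_eq (G.netDist_mk_mk _ _)).trans ?_
  refine le_trans (G.dN_le_single (G.rel_refl _) (G.rel_refl _)) ?_
  refine (le_of_eq (if_pos rfl)).trans ?_
  apply ENNReal.ofReal_le_ofReal
  have h1 : |min (max s 0) (G.W k) - min (max t 0) (G.W k)| ≤ |max s 0 - max t 0| := by
    refine le_trans (abs_min_sub_min_le_max _ _ _ _) ?_
    simp
  have h2 : |max s 0 - max t 0| ≤ |s - t| := abs_max_sub_max_le_abs _ _ _
  exact h1.trans h2

lemma edgeParam_continuous (k : G.K) : Continuous (G.edgeParam k) := by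
  rw [continuous_def]
  intro U hU
  rw [Metric.isOpen_iff]
  intro s hs
  obtain ⟨r, hr, hball⟩ := G.exists_ball_subset hU hs
  obtain ⟨δ, hδ, hlt⟩ := exists_real_lt hr
  refine ⟨δ, hδ, fun t ht => ?_⟩
  apply hball
  show G.netDist (G.edgeParam k s) (G.edgeParam k t) < r
  refine lt_of_le_of_lt (le_trans (G.edgeParam_lip k s t) ?_) hlt
  apply ENNReal.ofReal_le_ofReal
  rw [Metric.mem_ball, Real.dist_eq] at ht
  rw [abs_sub_comm]
  exact ht.le

lemma edgeParam_of_mem {k : G.K} {t : ℝ} (ht : t ∈ Icc 0 (G.W k)) :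
    G.edgeParam k t = Quotient.mk G.netSetoid ⟨k, ⟨t, ht⟩⟩ := by
  unfold edgeParam
  apply congrArg
  have h : min (max t 0) (G.W k) = t := by rw [max_eq_left ht.1, min_eq_left ht.2]
  exact Sigma.ext rfl (heq_of_eq (Subtype.ext h))

lemma edgeParam_of_mem' {k : G.K} {t : ℝ} (ht : t ∈ Icc 0 (G.W k)) :
    G.edgeParam k t = G.mkN ⟨k, ⟨t, ht⟩⟩ := G.edgeParam_of_mem ht

lemma edgeSet_eq_image (k : G.K) : G.edgeSet k = G.edgeParam k '' Icc 0 (G.W k) := by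
  ext x
  constructor
  · rintro ⟨⟨k', t, ht⟩, rfl, rfl⟩
    exact ⟨t, ht, G.edgeParam_of_mem ht⟩
  · rintro ⟨t, ht, rfl⟩
    exact ⟨⟨k, ⟨t, ht⟩⟩, rfl, (G.edgeParam_of_mem ht).symm⟩

lemma isCompact_edgeSet (k : G.K) : IsCompact (G.edgeSet k) := by
  rw [edgeSet_eq_image]
  exact isCompact_Icc.image (G.edgeParam_continuous k)

lemma joined_same_edge {p q : G.Un} (h : p.1 = q.1) :
    Joined (G.mkN p) (G.mkN q) := by
  obtain ⟨k, a, ha⟩ := p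
  obtain ⟨k', b, hb⟩ := q
  cases h
  rw [← G.edgeParam_of_mem' ha, ← G.edgeParam_of_mem' hb]
  refine ⟨⟨⟨fun σ => G.edgeParam k ((1 - σ.1) * a + σ.1 * b), ?_⟩, ?_, ?_⟩⟩
  · exact (G.edgeParam_continuous k).comp (by continuity)
  · norm_num
  · norm_num

lemma joined_mk_of_dN_lt_top {p q : G.Un} (h : G.dN p q < ⊤) :
    Joined (G.mkN p) (G.mkN q) := by
  obtain ⟨n, P, Q, h1, h2, h3, h4⟩ := G.exists_chain_of_lt h
  have hfin : ∀ i ≤ n, G.d' (P i) (Q i) ≠ ⊤ := by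
    intro i hi
    have : G.d' (P i) (Q i) ≤ ∑ j ∈ Finset.range (n+1), G.d' (P j) (Q j) :=
      Finset.single_le_sum (f := fun j => G.d' (P j) (Q j)) (fun _ _ => zero_le)
        (Finset.mem_range.mpr (by omega))
    exact (lt_of_le_of_lt this h4).ne
  have key : ∀ m, m ≤ n → Joined (G.mkN (P 0)) (G.mkN (Q m)) := by
    intro m
    induction m with
    | zero =>
      intro _
      apply G.joined_same_edge
      by_contra hne
      exact hfin 0 (by omega) (by rw [d', if_neg hne])
    | succ m ih =>
      intro hm
      have j1 := ih (by omega)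
      have j2 : G.mkN (Q m) = G.mkN (P (m+1)) :=
        G.mkN_eq_of_rel (h3 m (by omega))
      have j3 : Joined (G.mkN (P (m+1))) (G.mkN (Q (m+1))) := by
        apply G.joined_same_edge
        by_contra hne
        exact hfin (m+1) hm (by rw [d', if_neg hne])
      exact (j2 ▸ j1).trans j3
  have := key n le_rfl
  have e1 : G.mkN p = G.mkN (P 0) := G.mkN_eq_of_rel h1
  have e2 : G.mkN q = G.mkN (Q n) := G.mkN_eq_of_rel h2
  rw [e1, e2]
  exact this

lemma joined_of_netDist_lt_top {x y : G.Net} (h : G.netDist x y < ⊤) : Joined x y := by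
  rw [netDist_eq] at h
  have := G.joined_mk_of_dN_lt_top h
  rwa [G.out_mkN, G.out_mkN] at this

lemma pathConnected_of_connected (hconn : ConnectedSpace G.Net) :
    PathConnectedSpace G.Net := by
  haveI := hconn
  refine ⟨hconn.toNonempty, fun x y => ?_⟩
  set S := {y | G.netDist x y < ⊤} with hS
  have hopen : IsOpen S := G.isOpen_ball x ⊤
  have hclosed : IsClosed S := by
    rw [← isOpen_compl_iff]
    have hc : Sᶜ = ⋃ z ∈ Sᶜ, {y | G.netDist z y < ⊤} := by
      ext w
      constructor
      · intro hw
        exact mem_biUnion hw (by simp [G.netDist_self])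
      · intro hw
        simp only [mem_iUnion] at hw
        obtain ⟨z, hz, hzw⟩ := hw
        intro hwS
        apply hz
        have : G.netDist x z ≤ G.netDist x w + G.netDist w z := G.netDist_triangle _ _ _
        have hwz : G.netDist w z < ⊤ := by
          have : G.netDist z w < ⊤ := hzw
          rwa [G.netDist_comm z w] at this
        exact lt_of_le_of_lt this (ENNReal.add_lt_top.mpr ⟨hwS, hwz⟩)
    rw [hc]
    exact isOpen_biUnion fun z _ => G.isOpen_ball z ⊤
  have huniv : S = univ := IsClopen.eq_univ ⟨hclosed, hopen⟩ ⟨x, by simp [hS, G.netDist_self]⟩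
  have hy : G.netDist x y < ⊤ := by
    have : y ∈ S := huniv ▸ mem_univ y
    exact this
  exact G.joined_of_netDist_lt_top hy

section Localization

/-- Coordinates on edge `j` occupied by one of the two vertices of edge `k`. -/
def vC (k j : G.K) : Set ℝ :=
  {c | (c = 0 ∧ ((G.E j).1 = (G.E k).1 ∨ (G.E j).1 = (G.E k).2)) ∨
    (∃ j', G.E j' = G.E j ∧ G.W j' = c ∧ c ≤ G.W j ∧
      ((G.E j).2 = (G.E k).1 ∨ (G.E j).2 = (G.E k).2))}

/-- Truncated distance to the vertex coordinates. -/
noncomputable def dS (ε0 : ℝ) (k j : G.K) (u : ℝ) : ℝ :=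
  sInf ({ε0} ∪ (fun c => |u - c|) '' G.vC k j)

variable {ε0 : ℝ} (hε : 0 < ε0) (hlb : ∀ j, ε0 ≤ G.W j)

include hε

lemma dS_set_nonempty (k j : G.K) (u : ℝ) :
    ({ε0} ∪ (fun c => |u - c|) '' G.vC k j).Nonempty := ⟨ε0, Or.inl rfl⟩

lemma dS_set_bddBelow (k j : G.K) (u : ℝ) :
    BddBelow ({ε0} ∪ (fun c => |u - c|) '' G.vC k j) := by
  refine ⟨0, fun e he => ?_⟩
  rcases he with he | ⟨c, _, rfl⟩
  · rw [mem_singleton_iff] at he; rw [he]; exact hε.le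
  · positivity

lemma dS_nonneg (k j : G.K) (u : ℝ) : 0 ≤ G.dS ε0 k j u :=
  le_csInf (G.dS_set_nonempty hε k j u) (fun e he => by
    rcases he with he | ⟨c, _, rfl⟩
    · rw [mem_singleton_iff] at he; rw [he]; exact hε.le
    · positivity)

lemma dS_le_eps (k j : G.K) (u : ℝ) : G.dS ε0 k j u ≤ ε0 :=
  csInf_le (G.dS_set_bddBelow hε k j u) (Or.inl rfl)

lemma dS_le {k j : G.K} (u : ℝ) {c : ℝ} (hc : c ∈ G.vC k j) :
    G.dS ε0 k j u ≤ |u - c| :=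
  csInf_le (G.dS_set_bddBelow hε k j u) (Or.inr ⟨c, hc, rfl⟩)

lemma dS_eq_zero {k j : G.K} {u : ℝ} (hc : u ∈ G.vC k j) : G.dS ε0 k j u = 0 := by
  refine le_antisymm ?_ (G.dS_nonneg hε k j u)
  have := G.dS_le hε u hc
  simpa using this

lemma dS_eq_eps {k j : G.K} {u : ℝ} (h : ∀ c ∈ G.vC k j, ε0 ≤ |u - c|) :
    G.dS ε0 k j u = ε0 := by
  refine le_antisymm (G.dS_le_eps hε k j u) (le_csInf (G.dS_set_nonempty hε k j u) ?_)
  rintro e (he | ⟨c, hc, rfl⟩)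
  · rw [mem_singleton_iff] at he; rw [he]
  · exact h c hc

lemma dS_le_add (k j : G.K) (u u' : ℝ) :
    G.dS ε0 k j u ≤ G.dS ε0 k j u' + |u - u'| := by
  rw [← sub_le_iff_le_add]
  refine le_csInf (G.dS_set_nonempty hε k j u') ?_
  rintro e (he | ⟨c, hc, rfl⟩)
  · rw [mem_singleton_iff] at he
    subst he
    have := G.dS_le_eps hε k j u
    have := abs_nonneg (u - u')
    linarith
  · have h1 : G.dS ε0 k j u ≤ |u - c| := G.dS_le hε u hc
    have h2 : |u - c| ≤ |u' - c| + |u - u'| := by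
      calc |u - c| = |(u - u') + (u' - c)| := by ring_nf
        _ ≤ |u - u'| + |u' - c| := abs_add_le _ _
        _ = |u' - c| + |u - u'| := by ring
    linarith

lemma dS_lip (k j : G.K) (u u' : ℝ) :
    |G.dS ε0 k j u - G.dS ε0 k j u'| ≤ |u - u'| := by
  rw [abs_sub_le_iff]
  constructor
  · have := G.dS_le_add hε k j u u'
    linarith
  · have := G.dS_le_add hε k j u' u
    rw [abs_sub_comm] at this
    linarith

/-- The localization potential around the point `⟨k, t⟩`. -/
noncomputable def Phi (ε0 : ℝ) (k : G.K) (t : ℝ) (p : G.Un) : ℝ :=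
  open Classical in
  if G.E p.1 = G.E k then min (G.dS ε0 k p.1 p.2.1) |p.2.1 - t| else G.dS ε0 k p.1 p.2.1

lemma Phi_nonneg (k : G.K) (t : ℝ) (p : G.Un) : 0 ≤ G.Phi ε0 k t p := by
  unfold Phi
  split
  · exact le_min (G.dS_nonneg hε _ _ _) (abs_nonneg _)
  · exact G.dS_nonneg hε _ _ _

lemma Phi_eq_zero_of_dS {k : G.K} (t : ℝ) {p : G.Un} (h : G.dS ε0 k p.1 p.2.1 = 0) :
    G.Phi ε0 k t p = 0 := by
  unfold Phi
  split
  · rw [h]; exact min_eq_left (abs_nonneg _)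
  · exact h

lemma Phi_self (k : G.K) (t : ℝ) (ht : t ∈ Icc 0 (G.W k)) :
    G.Phi ε0 k t ⟨k, ⟨t, ht⟩⟩ = 0 := by
  unfold Phi
  rw [if_pos rfl]
  have h : |t - t| = (0 : ℝ) := by simp
  rw [show ((⟨k, ⟨t, ht⟩⟩ : G.Un).2.1) = t from rfl, h]
  exact min_eq_right (G.dS_nonneg hε _ _ _)

include hlb

lemma dS_congr_parallel {k j m : G.K} (hjm : G.E j = G.E m) {u : ℝ}
    (hj : u ≤ G.W j) (hm : u ≤ G.W m) (hu : 0 ≤ u) :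
    G.dS ε0 k j u = G.dS ε0 k m u := by
  clear hu
  have key : ∀ j m : G.K, G.E j = G.E m → u ≤ G.W j → u ≤ G.W m →
      G.dS ε0 k m u ≤ G.dS ε0 k j u := by
    clear hjm hj hm j m
    intro j m hjm hj hm
    refine le_csInf (G.dS_set_nonempty hε k j u) ?_
    rintro e (he | ⟨c, hc, rfl⟩)
    · rw [mem_singleton_iff] at he; rw [he]; exact G.dS_le_eps hε k m u
    · rcases hc with ⟨rfl, hv⟩ | ⟨j', hj', hwj', hcle, hv⟩
      · refine G.dS_le hε u (Or.inl ⟨rfl, ?_⟩)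
        rw [← hjm]; exact hv
      · subst hwj'
        by_cases hcm : G.W j' ≤ G.W m
        · exact G.dS_le hε u (Or.inr ⟨j', hj'.trans hjm, rfl, hcm, by rw [← hjm]; exact hv⟩)
        · push_neg at hcm
          have h1 : G.dS ε0 k m u ≤ |u - G.W m| :=
            G.dS_le hε u (Or.inr ⟨m, rfl, rfl, le_rfl, by rw [← hjm]; exact hv⟩)
          have h2 : |u - G.W m| ≤ |u - G.W j'| := by
            have e1 : |u - G.W m| = G.W m - u := by
              rw [abs_sub_comm, abs_of_nonneg (by linarith)]
            have e2 : |u - G.W j'| = G.W j' - u := by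
              rw [abs_sub_comm, abs_of_nonneg (by linarith)]
            rw [e1, e2]
            linarith
          linarith
  exact le_antisymm (key m j hjm.symm hm hj) (key j m hjm hj hm)

/-- Off-vertex endpoints are `ε0`-far from the vertex coordinates. -/
lemma dS_zero_eq_eps {k j : G.K}
    (hv : ¬((G.E j).1 = (G.E k).1 ∨ (G.E j).1 = (G.E k).2)) :
    G.dS ε0 k j 0 = ε0 := by
  refine G.dS_eq_eps hε ?_
  rintro c (⟨rfl, hv'⟩ | ⟨j', _, hwj', _, _⟩)
  · exact absurd hv' hv
  · rw [← hwj', abs_sub_comm, sub_zero, abs_of_nonneg (G.W_pos j').le]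
    exact hlb j'

lemma dS_W_eq_eps {k j : G.K}
    (hv : ¬((G.E j).2 = (G.E k).1 ∨ (G.E j).2 = (G.E k).2)) :
    G.dS ε0 k j (G.W j) = ε0 := by
  refine G.dS_eq_eps hε ?_
  rintro c (⟨rfl, _⟩ | ⟨j', _, _, _, hv'⟩)
  · rw [sub_zero, abs_of_nonneg (G.W_pos j).le]
    exact hlb j
  · exact absurd hv' hv

omit hlb in
lemma Phi_eq_eps {k j : G.K} (t : ℝ) {u : ℝ} (hu : u ∈ Icc 0 (G.W j))
    (hds : G.dS ε0 k j u = ε0)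
    (hne : G.E j ≠ G.E k) : G.Phi ε0 k t ⟨j, ⟨u, hu⟩⟩ = ε0 := by
  unfold Phi
  rw [if_neg hne]
  exact hds

/-- Invariance of the potential under the gluing relation. -/
lemma Phi_invariant (k : G.K) (t : ℝ) :
    ∀ p q, G.netRel p q → G.Phi ε0 k t p = G.Phi ε0 k t q := by
  rintro ⟨j, u, hu⟩ ⟨m, w, hw⟩ hrel
  rcases hrel with ⟨he, hE⟩ | ⟨hp, hq, hV⟩ | ⟨hp, hq, hV⟩ | ⟨hp, hq, hV⟩ | ⟨hp, hq, hV⟩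
  · -- clause 1
    have he' : u = w := he
    have hE' : G.E j = G.E m := hE
    subst he'
    have hds : G.dS ε0 k j u = G.dS ε0 k m u := G.dS_congr_parallel hε hlb hE' hu.2 hw.2 hu.1
    unfold Phi
    simp only
    rw [hE', hds]
  · -- clause 2 : 0 - 0
    have hp' : u = 0 := hp
    have hq' : w = 0 := hq
    have hV' : (G.E j).1 = (G.E m).1 := hV
    subst hp'; subst hq'
    by_cases hv : (G.E j).1 = (G.E k).1 ∨ (G.E j).1 = (G.E k).2
    · rw [G.Phi_eq_zero_of_dS hε t (p := ⟨j, ⟨0, hu⟩⟩) (G.dS_eq_zero hε (Or.inl ⟨rfl, hv⟩)),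
        G.Phi_eq_zero_of_dS hε t (p := ⟨m, ⟨0, hw⟩⟩) (G.dS_eq_zero hε (Or.inl ⟨rfl, by rw [← hV']; exact hv⟩))]
    · have hvm : ¬((G.E m).1 = (G.E k).1 ∨ (G.E m).1 = (G.E k).2) := by rw [← hV']; exact hv
      have hnej : G.E j ≠ G.E k := fun hEj => hv (Or.inl (by rw [hEj]))
      have hnem : G.E m ≠ G.E k := fun hEm => hvm (Or.inl (by rw [hEm]))
      rw [G.Phi_eq_eps hε t _ (G.dS_zero_eq_eps hε hlb hv) hnej,
        G.Phi_eq_eps hε t _ (G.dS_zero_eq_eps hε hlb hvm) hnem]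
  · -- clause 3 : 0 - W
    have hp' : u = 0 := hp
    have hq' : w = G.W m := hq
    have hV' : (G.E j).1 = (G.E m).2 := hV
    subst hp'; subst hq'
    by_cases hv : (G.E j).1 = (G.E k).1 ∨ (G.E j).1 = (G.E k).2
    · rw [G.Phi_eq_zero_of_dS hε t (p := ⟨j, ⟨0, hu⟩⟩) (G.dS_eq_zero hε (Or.inl ⟨rfl, hv⟩)),
        G.Phi_eq_zero_of_dS hε t (p := ⟨m, ⟨G.W m, hw⟩⟩)
          (G.dS_eq_zero hε (Or.inr ⟨m, rfl, rfl, le_rfl, by rw [← hV']; exact hv⟩))]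
    · have hvm : ¬((G.E m).2 = (G.E k).1 ∨ (G.E m).2 = (G.E k).2) := by rw [← hV']; exact hv
      have hnej : G.E j ≠ G.E k := fun hEj => hv (Or.inl (by rw [hEj]))
      have hnem : G.E m ≠ G.E k := fun hEm => hvm (Or.inr (by rw [hEm]))
      rw [G.Phi_eq_eps hε t _ (G.dS_zero_eq_eps hε hlb hv) hnej,
        G.Phi_eq_eps hε t _ (G.dS_W_eq_eps hε hlb hvm) hnem]
  · -- clause 4 : W - 0
    have hp' : u = G.W j := hp
    have hq' : w = 0 := hq
    have hV' : (G.E j).2 = (G.E m).1 := hV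
    subst hp'; subst hq'
    by_cases hv : (G.E j).2 = (G.E k).1 ∨ (G.E j).2 = (G.E k).2
    · rw [G.Phi_eq_zero_of_dS hε t (p := ⟨j, ⟨G.W j, hu⟩⟩) (G.dS_eq_zero hε (Or.inr ⟨j, rfl, rfl, le_rfl, hv⟩)),
        G.Phi_eq_zero_of_dS hε t (p := ⟨m, ⟨0, hw⟩⟩) (G.dS_eq_zero hε (Or.inl ⟨rfl, by rw [← hV']; exact hv⟩))]
    · have hvm : ¬((G.E m).1 = (G.E k).1 ∨ (G.E m).1 = (G.E k).2) := by rw [← hV']; exact hv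
      have hnej : G.E j ≠ G.E k := fun hEj => hv (Or.inr (by rw [hEj]))
      have hnem : G.E m ≠ G.E k := fun hEm => hvm (Or.inl (by rw [hEm]))
      rw [G.Phi_eq_eps hε t _ (G.dS_W_eq_eps hε hlb hv) hnej,
        G.Phi_eq_eps hε t _ (G.dS_zero_eq_eps hε hlb hvm) hnem]
  · -- clause 5 : W - W
    have hp' : u = G.W j := hp
    have hq' : w = G.W m := hq
    have hV' : (G.E j).2 = (G.E m).2 := hV
    subst hp'; subst hq'
    by_cases hv : (G.E j).2 = (G.E k).1 ∨ (G.E j).2 = (G.E k).2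
    · rw [G.Phi_eq_zero_of_dS hε t (p := ⟨j, ⟨G.W j, hu⟩⟩) (G.dS_eq_zero hε (Or.inr ⟨j, rfl, rfl, le_rfl, hv⟩)),
        G.Phi_eq_zero_of_dS hε t (p := ⟨m, ⟨G.W m, hw⟩⟩)
          (G.dS_eq_zero hε (Or.inr ⟨m, rfl, rfl, le_rfl, by rw [← hV']; exact hv⟩))]
    · have hvm : ¬((G.E m).2 = (G.E k).1 ∨ (G.E m).2 = (G.E k).2) := by rw [← hV']; exact hv
      have hnej : G.E j ≠ G.E k := fun hEj => hv (Or.inr (by rw [hEj]))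
      have hnem : G.E m ≠ G.E k := fun hEm => hvm (Or.inr (by rw [hEm]))
      rw [G.Phi_eq_eps hε t _ (G.dS_W_eq_eps hε hlb hv) hnej,
        G.Phi_eq_eps hε t _ (G.dS_W_eq_eps hε hlb hvm) hnem]

omit hlb in
lemma Phi_lip (k : G.K) (t : ℝ) :
    ∀ p q : G.Un, p.1 = q.1 → |G.Phi ε0 k t p - G.Phi ε0 k t q| ≤ |p.2.1 - q.2.1| := by
  rintro ⟨j, u, hu⟩ ⟨m, w, hw⟩ h
  have h' : j = m := h
  subst h'
  show |G.Phi ε0 k t ⟨j, ⟨u, hu⟩⟩ - G.Phi ε0 k t ⟨j, ⟨w, hw⟩⟩| ≤ |u - w|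
  unfold Phi
  simp only
  split
  · refine le_trans (abs_min_sub_min_le_max _ _ _ _) (max_le (G.dS_lip hε k j u w) ?_)
    calc |(|u - t|) - (|w - t|)| ≤ |(u - t) - (w - t)| := abs_abs_sub_abs_le_abs_sub _ _
      _ = |u - w| := by ring_nf
  · exact G.dS_lip hε k j u w

omit hlb in
lemma Phi_eq_eps_of_not_adj {k j : G.K} (t : ℝ)
    (hadj : ¬((G.E j).1 = (G.E k).1 ∨ (G.E j).1 = (G.E k).2 ∨
      (G.E j).2 = (G.E k).1 ∨ (G.E j).2 = (G.E k).2))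
    (u : ℝ) (hu : u ∈ Icc 0 (G.W j)) : G.Phi ε0 k t ⟨j, ⟨u, hu⟩⟩ = ε0 := by
  push_neg at hadj
  obtain ⟨h1, h2, h3, h4⟩ := hadj
  have hds : G.dS ε0 k j u = ε0 := by
    refine G.dS_eq_eps hε ?_
    rintro c (⟨rfl, hv'⟩ | ⟨j', _, _, _, hv'⟩)
    · rcases hv' with hv' | hv'
      · exact absurd hv' h1
      · exact absurd hv' h2
    · rcases hv' with hv' | hv'
      · exact absurd hv' h3
      · exact absurd hv' h4
  exact G.Phi_eq_eps hε t hu hds (fun hEj => h1 (by rw [hEj]))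

/-- Localization: points at distance less than `ε0` from a point of edge `k`
lie on edges adjacent to `k`. -/
lemma adj_of_dN_lt {k : G.K} {t : ℝ} {ht : t ∈ Icc 0 (G.W k)} {q : G.Un}
    (h : G.dN ⟨k, ⟨t, ht⟩⟩ q < ENNReal.ofReal ε0) :
    (G.E q.1).1 = (G.E k).1 ∨ (G.E q.1).1 = (G.E k).2 ∨
      (G.E q.1).2 = (G.E k).1 ∨ (G.E q.1).2 = (G.E k).2 := by
  by_contra hadj
  have hF := G.ofReal_abs_sub_le_dN (G.Phi ε0 k t) (G.Phi_invariant hε hlb k t)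
    (G.Phi_lip hε k t) ⟨k, ⟨t, ht⟩⟩ q
  rw [G.Phi_self hε k t ht] at hF
  obtain ⟨j, u, hu⟩ := q
  rw [G.Phi_eq_eps_of_not_adj hε t hadj u hu] at hF
  rw [zero_sub, abs_neg, abs_of_nonneg hε.le] at hF
  exact absurd (lt_of_le_of_lt hF h) (lt_irrefl _)

end Localization

def pt0 (k : G.K) : G.Un := ⟨k, ⟨0, ⟨le_rfl, (G.W_pos k).le⟩⟩⟩

def ptW (k : G.K) : G.Un := ⟨k, ⟨G.W k, ⟨(G.W_pos k).le, le_rfl⟩⟩⟩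

lemma isVertex_pt0 (k : G.K) : G.IsVertex (G.mkN (G.pt0 k)) :=
  ⟨G.pt0 k, rfl, Or.inl rfl⟩

lemma isVertex_ptW (k : G.K) : G.IsVertex (G.mkN (G.ptW k)) :=
  ⟨G.ptW k, rfl, Or.inr rfl⟩

/-- The star of finitely many edges around edge `k`, via local finiteness. -/
lemma adj_finite (hG : G.IsRegular) (k : G.K) :
    {j : G.K | (G.E j).1 = (G.E k).1 ∨ (G.E j).1 = (G.E k).2 ∨
      (G.E j).2 = (G.E k).1 ∨ (G.E j).2 = (G.E k).2}.Finite := by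
  have h0 := hG.locFin _ (G.isVertex_pt0 k)
  have hW := hG.locFin _ (G.isVertex_ptW k)
  refine (h0.union hW).subset ?_
  rintro j (h | h | h | h)
  · left
    refine ⟨G.pt0 j, rfl, G.mkN_eq_of_rel (Relation.EqvGen.rel _ _ ?_)⟩
    exact Or.inr (Or.inl ⟨rfl, rfl, h⟩)
  · right
    refine ⟨G.pt0 j, rfl, G.mkN_eq_of_rel (Relation.EqvGen.rel _ _ ?_)⟩
    exact Or.inr (Or.inr (Or.inl ⟨rfl, rfl, h⟩))
  · left
    refine ⟨G.ptW j, rfl, G.mkN_eq_of_rel (Relation.EqvGen.rel _ _ ?_)⟩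
    exact Or.inr (Or.inr (Or.inr (Or.inl ⟨rfl, rfl, h⟩)))
  · right
    refine ⟨G.ptW j, rfl, G.mkN_eq_of_rel (Relation.EqvGen.rel _ _ ?_)⟩
    exact Or.inr (Or.inr (Or.inr (Or.inr ⟨rfl, rfl, h⟩)))

lemma mem_edgeSet_out (y : G.Net) : y ∈ G.edgeSet y.out.1 :=
  ⟨y.out, rfl, Quotient.out_eq y⟩

/-- Small balls are covered by finitely many edges. -/
lemma ball_subset_edges (hG : G.IsRegular) {ε0 : ℝ} (hε : 0 < ε0)
    (hlb : ∀ j, ε0 ≤ G.W j) (x : G.Net) :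
    ∃ T : Set G.K, T.Finite ∧
      ∀ y, G.netDist x y < ENNReal.ofReal ε0 → ∃ j ∈ T, y ∈ G.edgeSet j := by
  refine ⟨{j : G.K | (G.E j).1 = (G.E x.out.1).1 ∨ (G.E j).1 = (G.E x.out.1).2 ∨
      (G.E j).2 = (G.E x.out.1).1 ∨ (G.E j).2 = (G.E x.out.1).2},
    G.adj_finite hG x.out.1, fun y hy => ?_⟩
  rw [netDist_eq] at hy
  have hx : x.out = ⟨x.out.1, ⟨x.out.2.1, x.out.2.2⟩⟩ := rfl
  rw [hx] at hy
  exact ⟨y.out.1, G.adj_of_dN_lt hε hlb hy, G.mem_edgeSet_out y⟩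

lemma isClosed_closedBall (x : G.Net) (r : ℝ≥0∞) :
    IsClosed {y | G.netDist x y ≤ r} := by
  rw [← isOpen_compl_iff]
  have hc : {y | G.netDist x y ≤ r}ᶜ
      = ⋃ z ∈ {y : G.Net | G.netDist x y ≤ r}ᶜ, {y | G.netDist z y < G.netDist x z - r} := by
    ext w
    constructor
    · intro hw
      refine mem_biUnion hw ?_
      have hrw : r < G.netDist x w := not_le.mp hw
      show G.netDist w w < G.netDist x w - r
      rw [G.netDist_self]
      exact tsub_pos_iff_lt.mpr hrw
    · intro hw
      simp only [mem_iUnion] at hw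
      obtain ⟨z, hz, hzw⟩ := hw
      have hrz : r < G.netDist x z := not_le.mp hz
      intro hwr
      have hwr' : G.netDist x w ≤ r := hwr
      have h1 : G.netDist x z ≤ G.netDist x w + G.netDist w z := G.netDist_triangle _ _ _
      have h2 : G.netDist w z < G.netDist x z - r := by
        rw [G.netDist_comm w z]; exact hzw
      have hrtop : r ≠ ⊤ := (hrz.trans_le le_top).ne
      have h3 : G.netDist x w + G.netDist w z < r + (G.netDist x z - r) :=
        ENNReal.add_lt_add_of_le_of_lt (hwr'.trans_lt hrtop.lt_top).ne hwr' h2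
      rw [add_tsub_cancel_of_le hrz.le] at h3
      exact absurd (lt_of_le_of_lt h1 h3) (lt_irrefl _)
  rw [hc]
  exact isOpen_biUnion fun z _ => G.isOpen_ball z _

lemma locallyCompact (hG : G.IsRegular) : LocallyCompactSpace G.Net := by
  obtain ⟨ε0, hε, hlb⟩ := hG.lb
  refine ⟨fun x U hU => ?_⟩
  rw [mem_nhds_iff] at hU
  obtain ⟨V, hVU, hV, hxV⟩ := hU
  obtain ⟨r, hr, hball⟩ := G.exists_ball_subset hV hxV
  obtain ⟨T, hT, hcover⟩ := G.ball_subset_edges hG hε hlb x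
  set r' := min (r / 2) (ENNReal.ofReal ε0 / 2) with hr'def
  have hofε : (0 : ℝ≥0∞) < ENNReal.ofReal ε0 := ENNReal.ofReal_pos.mpr hε
  have hr'pos : 0 < r' := lt_min (ENNReal.half_pos hr.ne') (ENNReal.half_pos hofε.ne')
  have hr'eps : r' < ENNReal.ofReal ε0 :=
    lt_of_le_of_lt (min_le_right _ _)
      (ENNReal.half_lt_self hofε.ne' ENNReal.ofReal_ne_top)
  have hr'r : r' < r := by
    rcases eq_or_ne r ⊤ with rfl | hrt
    · exact lt_of_le_of_lt (min_le_right _ _)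
        (lt_of_lt_of_le (ENNReal.half_lt_self hofε.ne' ENNReal.ofReal_ne_top) le_top)
    · exact lt_of_le_of_lt (min_le_left _ _) (ENNReal.half_lt_self hr.ne' hrt)
  refine ⟨{y | G.netDist x y ≤ r'}, ?_, ?_, ?_⟩
  · rw [mem_nhds_iff]
    exact ⟨{y | G.netDist x y < r'}, fun y hy => show G.netDist x y ≤ r' from le_of_lt hy,
      G.isOpen_ball x r',
      by simp [G.netDist_self, hr'pos]⟩
  · intro y hy
    exact hVU (hball (lt_of_le_of_lt hy hr'r))
  · have hcomp : IsCompact (⋃ j ∈ T, G.edgeSet j) :=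
      hT.isCompact_biUnion fun j _ => G.isCompact_edgeSet j
    refine IsCompact.of_isClosed_subset hcomp (G.isClosed_closedBall x r') ?_
    intro y hy
    obtain ⟨j, hj, hyj⟩ := hcover y (lt_of_le_of_lt hy hr'eps)
    exact mem_biUnion hj hyj

lemma complete_seq (hG : G.IsRegular) (u : ℕ → G.Net)
    (hcau : ∀ δ : ℝ≥0∞, 0 < δ → ∃ N, ∀ m ≥ N, ∀ n ≥ N, G.netDist (u m) (u n) < δ) :
    ∃ x, ∀ δ : ℝ≥0∞, 0 < δ → ∃ N, ∀ n ≥ N, G.netDist x (u n) < δ := by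
  obtain ⟨ε0, hε, hlb⟩ := hG.lb
  have hofε : (0 : ℝ≥0∞) < ENNReal.ofReal ε0 := ENNReal.ofReal_pos.mpr hε
  obtain ⟨N0, hN0⟩ := hcau _ hofε
  obtain ⟨T, hT, hcover⟩ := G.ball_subset_edges hG hε hlb (u N0)
  have hmem : ∀ n ≥ N0, ∃ j ∈ T, u n ∈ G.edgeSet j := fun n hn =>
    hcover (u n) (hN0 N0 le_rfl n hn)
  have hinf : ∃ j ∈ T, {n | N0 ≤ n ∧ u n ∈ G.edgeSet j}.Infinite := by
    by_contra hfin
    push_neg at hfin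
    have hsub : {n : ℕ | N0 ≤ n} ⊆ ⋃ j ∈ T, {n | N0 ≤ n ∧ u n ∈ G.edgeSet j} := by
      intro n hn
      obtain ⟨j, hj, hm⟩ := hmem n hn
      exact mem_biUnion hj ⟨hn, hm⟩
    have hfin2 : {n : ℕ | N0 ≤ n}.Finite :=
      (Set.Finite.biUnion hT (fun j hj => by simpa using hfin j hj)).subset hsub
    have : (Set.Ici N0).Infinite := Set.Ici_infinite N0
    exact this hfin2
  obtain ⟨j, hjT, hA⟩ := hinf
  set A := {n | N0 ≤ n ∧ u n ∈ G.edgeSet j} with hAdef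
  have hrep : ∀ n, n ∈ A → ∃ s, s ∈ Icc 0 (G.W j) ∧ G.edgeParam j s = u n := by
    intro n hn
    obtain ⟨⟨j', s, hs⟩, hj', hmk⟩ := hn.2
    have hj'' : j' = j := hj'
    subst hj''
    exact ⟨s, hs, by rw [G.edgeParam_of_mem' hs]; exact hmk⟩
  choose! S hS1 hS2 using hrep
  set L := Filter.atTop ⊓ Filter.principal A with hLdef
  have hneL : L.NeBot := by
    rw [Filter.inf_principal_neBot_iff]
    intro U hU
    obtain ⟨N, hN⟩ := Filter.mem_atTop_sets.mp hU
    obtain ⟨m, hm, hlt⟩ := hA.exists_gt N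
    exact ⟨m, hN m hlt.le, hm⟩
  have hle : Filter.map S L ≤ Filter.principal (Icc 0 (G.W j)) := by
    rw [Filter.le_principal_iff, Filter.mem_map]
    exact Filter.mem_of_superset (Filter.mem_inf_of_right (Filter.mem_principal_self A))
      (fun n hn => hS1 n hn)
  obtain ⟨t₀, ht₀, hclst⟩ := isCompact_Icc.exists_clusterPt hle
  refine ⟨G.edgeParam j t₀, fun δ hδ => ?_⟩
  have hδ2 : (0 : ℝ≥0∞) < δ / 2 := ENNReal.half_pos hδ.ne'
  obtain ⟨N1, hN1⟩ := hcau (δ / 2) hδ2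
  obtain ⟨η, hη, hηδ⟩ := exists_real_lt hδ2
  -- find a frequent index
  have hWmem : Set.Ici N1 ∩ A ∈ L :=
    Filter.inter_mem (Filter.mem_inf_of_left (Filter.Ici_mem_atTop N1))
      (Filter.mem_inf_of_right (Filter.mem_principal_self A))
  have hVmem : S '' (Set.Ici N1 ∩ A) ∈ Filter.map S L :=
    Filter.image_mem_map hWmem
  have hball : Metric.ball t₀ η ∈ 𝓝 t₀ := Metric.ball_mem_nhds t₀ hη
  obtain ⟨y, hyU, hyV⟩ := clusterPt_iff_nonempty.mp hclst hball hVmem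
  obtain ⟨n₀, ⟨hn₀N, hn₀A⟩, rfl⟩ := hyV
  refine ⟨N1, fun n hn => ?_⟩
  have h1 : G.netDist (G.edgeParam j t₀) (u n₀) < δ / 2 := by
    rw [← hS2 n₀ hn₀A]
    refine lt_of_le_of_lt (G.edgeParam_lip j t₀ (S n₀)) (lt_of_le_of_lt ?_ hηδ)
    apply ENNReal.ofReal_le_ofReal
    rw [Metric.mem_ball, Real.dist_eq] at hyU
    rw [abs_sub_comm]
    exact hyU.le
  have h2 : G.netDist (u n₀) (u n) < δ / 2 := hN1 n₀ hn₀N n hn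
  calc G.netDist (G.edgeParam j t₀) (u n)
      ≤ G.netDist (G.edgeParam j t₀) (u n₀) + G.netDist (u n₀) (u n) :=
        G.netDist_triangle _ _ _
    _ < δ / 2 + δ / 2 := ENNReal.add_lt_add h1 h2
    _ = δ := ENNReal.add_halves δ

def AdjK (k j : G.K) : Prop :=
  (G.E j).1 = (G.E k).1 ∨ (G.E j).1 = (G.E k).2 ∨
    (G.E j).2 = (G.E k).1 ∨ (G.E j).2 = (G.E k).2

def TnSet (k0 : G.K) : ℕ → Set G.K
  | 0 => {k0}
  | n+1 => {j | ∃ k ∈ TnSet k0 n, G.AdjK k j}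

lemma TnSet_finite (hG : G.IsRegular) (k0 : G.K) : ∀ n, (G.TnSet k0 n).Finite := by
  intro n
  induction n with
  | zero => simp only [TnSet]; exact Set.finite_singleton k0
  | succ n ih =>
    have heq : G.TnSet k0 (n+1) = ⋃ k ∈ G.TnSet k0 n, {j | G.AdjK k j} := by
      ext j
      simp [TnSet, mem_iUnion]
    rw [heq]
    exact ih.biUnion fun k _ => G.adj_finite hG k

lemma adjK_out_of_mem_edgeSet {ε0 : ℝ} (hε : 0 < ε0) (hlb : ∀ j, ε0 ≤ G.W j)
    {j : G.K} {x : G.Net} (hx : x ∈ G.edgeSet j) : G.AdjK j x.out.1 := by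
  obtain ⟨⟨j', s, hs⟩, hj', hmk⟩ := hx
  have hj'' : j' = j := hj'
  subst hj''
  have hrel : G.Rel ⟨j', ⟨s, hs⟩⟩ x.out := by
    have h := G.rel_out_mk ⟨j', ⟨s, hs⟩⟩
    rw [hmk] at h
    exact G.rel_symm h
  have h0 : G.dN ⟨j', ⟨s, hs⟩⟩ x.out < ENNReal.ofReal ε0 := by
    rw [G.dN_self_of_rel hrel]
    exact ENNReal.ofReal_pos.mpr hε
  exact G.adj_of_dN_lt hε hlb h0

lemma adjK_out_out {ε0 : ℝ} (hε : 0 < ε0) (hlb : ∀ j, ε0 ≤ G.W j)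
    {x y : G.Net} (hxy : G.netDist x y < ENNReal.ofReal ε0) :
    G.AdjK x.out.1 y.out.1 := by
  rw [netDist_eq] at hxy
  have hx : x.out = ⟨x.out.1, ⟨x.out.2.1, x.out.2.2⟩⟩ := rfl
  rw [hx] at hxy
  exact G.adj_of_dN_lt hε hlb hxy

lemma separable (hG : G.IsRegular) : TopologicalSpace.SeparableSpace G.Net := by
  obtain ⟨ε0, hε, hlb⟩ := hG.lb
  haveI := hG.conn
  obtain ⟨x0⟩ := hG.conn.toNonempty
  set k0 := x0.out.1 with hk0
  set T : Set G.K := ⋃ n, G.TnSet k0 n with hT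
  have hofε : (0 : ℝ≥0∞) < ENNReal.ofReal ε0 := ENNReal.ofReal_pos.mpr hε
  have hTc : T.Countable := countable_iUnion fun n => (G.TnSet_finite hG k0 n).countable
  have hk0T : k0 ∈ T := mem_iUnion.mpr ⟨0, by simp [TnSet]⟩
  have hTadj : ∀ k ∈ T, ∀ j, G.AdjK k j → j ∈ T := by
    rintro k hk j hadj
    rw [hT, mem_iUnion] at hk ⊢
    obtain ⟨n, hn⟩ := hk
    exact ⟨n+1, ⟨k, hn, hadj⟩⟩
  set U := ⋃ j ∈ T, G.edgeSet j with hU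
  have hmemU : ∀ {x : G.Net}, x ∈ U → x.out.1 ∈ T := by
    intro x hx
    rw [hU, mem_iUnion] at hx
    obtain ⟨j, hj⟩ := hx
    rw [mem_iUnion] at hj
    obtain ⟨hjT, hxj⟩ := hj
    exact hTadj j hjT _ (G.adjK_out_of_mem_edgeSet hε hlb hxj)
  have hUopen : IsOpen U := by
    have heq : U = ⋃ x ∈ U, {y | G.netDist x y < ENNReal.ofReal ε0} := by
      ext y
      constructor
      · intro hy
        exact mem_biUnion hy (by simp [G.netDist_self, hofε])
      · intro hy
        simp only [mem_iUnion] at hy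
        obtain ⟨x, hxU, hxy⟩ := hy
        have hyT : y.out.1 ∈ T := hTadj _ (hmemU hxU) _ (G.adjK_out_out hε hlb hxy)
        exact mem_biUnion hyT (G.mem_edgeSet_out y)
    rw [heq]
    exact isOpen_biUnion fun x _ => G.isOpen_ball x _
  have hUclosed : IsClosed U := by
    rw [← isOpen_compl_iff]
    have heq : Uᶜ = ⋃ x ∈ Uᶜ, {y | G.netDist x y < ENNReal.ofReal ε0} := by
      ext y
      constructor
      · intro hy
        exact mem_biUnion hy (by simp [G.netDist_self, hofε])
      · intro hy
        simp only [mem_iUnion] at hy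
        obtain ⟨x, hxU, hxy⟩ := hy
        intro hyU
        apply hxU
        have hyx : G.netDist y x < ENNReal.ofReal ε0 := by
          rw [G.netDist_comm y x]; exact hxy
        have hxT : x.out.1 ∈ T := hTadj _ (hmemU hyU) _ (G.adjK_out_out hε hlb hyx)
        exact mem_biUnion hxT (G.mem_edgeSet_out x)
    rw [heq]
    exact isOpen_biUnion fun x _ => G.isOpen_ball x _
  have hUne : U.Nonempty := ⟨x0, mem_biUnion hk0T (G.mem_edgeSet_out x0)⟩
  have hUuniv : U = univ := IsClopen.eq_univ ⟨hUclosed, hUopen⟩ hUne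
  set D := ⋃ j ∈ T, range (fun q : ℚ => G.edgeParam j (q : ℝ)) with hD
  have hDc : D.Countable := hTc.biUnion fun j _ => countable_range _
  refine ⟨⟨D, hDc, ?_⟩⟩
  rw [dense_iff_inter_open]
  intro O hO hOne
  obtain ⟨x, hx⟩ := hOne
  obtain ⟨r, hr, hball⟩ := G.exists_ball_subset hO hx
  obtain ⟨η, hη, hηr⟩ := exists_real_lt hr
  obtain ⟨q, hq⟩ := exists_rat_near (x.out.2.1) hη
  have hxT : x.out.1 ∈ T := hmemU (hUuniv ▸ mem_univ x)
  refine ⟨G.edgeParam x.out.1 q, ?_, ?_⟩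
  · apply hball
    show G.netDist x (G.edgeParam x.out.1 (q : ℝ)) < r
    have hxe : G.edgeParam x.out.1 x.out.2.1 = x := by
      rw [G.edgeParam_of_mem' x.out.2.2]
      exact G.out_mkN x
    calc G.netDist x (G.edgeParam x.out.1 (q : ℝ))
        = G.netDist (G.edgeParam x.out.1 x.out.2.1) (G.edgeParam x.out.1 (q : ℝ)) := by
          rw [hxe]
      _ ≤ ENNReal.ofReal |x.out.2.1 - (q : ℝ)| := G.edgeParam_lip _ _ _
      _ ≤ ENNReal.ofReal η := ENNReal.ofReal_le_ofReal hq.le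
      _ < r := hηr
  · exact mem_biUnion hxT ⟨q, rfl⟩
end WeightedGraph

/-- A regular network is a Polish space: path-connected, complete, locally compact
and separable. -/
theorem regular_polish (G : WeightedGraph) (hG : G.IsRegular) :
    PathConnectedSpace G.Net ∧
    (∀ u : ℕ → G.Net,
      (∀ δ : ℝ≥0∞, 0 < δ → ∃ N : ℕ, ∀ m ≥ N, ∀ n ≥ N, G.netDist (u m) (u n) < δ) →
      ∃ x : G.Net, ∀ δ : ℝ≥0∞, 0 < δ → ∃ N : ℕ, ∀ n ≥ N, G.netDist x (u n) < δ) ∧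
    LocallyCompactSpace G.Net ∧
    TopologicalSpace.SeparableSpace G.Net :=
  ⟨G.pathConnected_of_connected hG.conn, G.complete_seq hG, G.locallyCompact hG,
    G.separable hG⟩
end
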